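/- arXiv:2205.04082 — 6 statements merged into one kernel-verified Lean document; each statement's English description precedes it below -/
import Mathlib

section
/- Let n ≥ 5 be an odd integer. Then the maximum of mis(G) over all triangle-free simple graphs G on n vertices equals 5 · 2^{(n−5)/2}; that is, every triangle-free graph G on n vertices satisfies mis(G) ≤ 5 · 2^{(n−5)/2}, and some triangle-free graph on n vertices attains this value. -/
/-- A finset of vertices is independent: no two of its elements are adjacent. -/
def IsIndepFinset {V : Type*} (G : SimpleGraph V) (s : Finset V) : Prop :=
  ∀ ⦃a⦄, a ∈ s → ∀ ⦃b⦄, b ∈ s → ¬ G.Adj a b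

/-- A finset of vertices is a maximal independent set: it is independent and is not
properly contained in any other independent set. -/
def IsMaxIndepFinset {V : Type*} (G : SimpleGraph V) (s : Finset V) : Prop :=
  IsIndepFinset G s ∧ ∀ t : Finset V, IsIndepFinset G t → s ⊆ t → s = t

/-- `mis G` is the number of maximal independent sets of `G`. -/
noncomputable def mis {V : Type*} (G : SimpleGraph V) : ℕ :=
  Set.ncard {s : Finset V | IsMaxIndepFinset G s}

/-- `G` has an induced triangle matching of size `t`: there are `t` pairwise disjoint
triples of vertices, each triple pairwise adjacent (a triangle), with no edges between
distinct triples (so the induced subgraph on their union is a disjoint union of `t`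
triangles). -/
def HasInducedTriangleMatching {V : Type*} (G : SimpleGraph V) (t : ℕ) : Prop :=
  ∃ f : Fin t → Finset V,
    (∀ i, (f i).card = 3) ∧
    (∀ i j, i ≠ j → Disjoint (f i) (f j)) ∧
    (∀ i, ∀ a ∈ f i, ∀ b ∈ f i, a ≠ b → G.Adj a b) ∧
    (∀ i j, i ≠ j → ∀ a ∈ f i, ∀ b ∈ f j, ¬ G.Adj a b)

/-- `G` has an induced matching of size `t`: there are `t` pairwise disjoint
pairs of vertices, each pair adjacent, with no edges between distinct pairs. -/
def HasInducedMatching {V : Type*} (G : SimpleGraph V) (t : ℕ) : Prop :=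
  ∃ f : Fin t → Finset V,
    (∀ i, (f i).card = 2) ∧
    (∀ i j, i ≠ j → Disjoint (f i) (f j)) ∧
    (∀ i, ∀ a ∈ f i, ∀ b ∈ f i, a ≠ b → G.Adj a b) ∧
    (∀ i j, i ≠ j → ∀ a ∈ f i, ∀ b ∈ f j, ¬ G.Adj a b)

/-!
Write `g = htBound` and induct on the vertex set `W`, `n = #W`, of an induced subgraph. The
maximal independent sets of `W` containing a fixed independent set `c` inject, via `s ↦ s \ c`,
into those of `W` minus the closed neighbourhood of `c`. Take `v` of minimum degree `d` in `W`.
Every maximal independent set meets the closed neighbourhood of `v`, so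
`mis ≤ (d + 1) g (n - d - 1)`, which is at most `g n` unless `d = 2`. If `d = 2`, the neighbours
`u₁, u₂` of `v` are non-adjacent (no triangles); say `deg u₁ ≤ deg u₂`. A set avoiding `v` and
`u₁` contains `u₂` and a neighbour `w ≠ v` of `u₁` not adjacent to `u₂`, whence
`mis ≤ g (n - 3) + g (n - 1 - deg u₁) + (deg u₁ - 1) g (n - 3 - deg u₂) ≤ g n`.

Equality for odd `n` comes from `C₅` plus a perfect matching on the remaining `n - 5` vertices,
since `mis` is multiplicative over disjoint unions.
-/

open Finset SimpleGraph

-- `htBound n` is `2 ^ (n / 2)` for even `n` and for `n ≤ 3`, and `5 * 2 ^ ((n - 5) / 2)` for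
-- odd `n ≥ 5`.
def htBound : ℕ → ℕ
  | 0 => 1
  | 1 => 1
  | 2 => 2
  | 3 => 2
  | 4 => 4
  | 5 => 5
  | m + 6 => 2 * htBound (m + 4)

lemma htBound_add_six (m : ℕ) : htBound (m + 6) = 2 * htBound (m + 4) := rfl

lemma htBound_two_mul_add_five (k : ℕ) : htBound (2 * k + 5) = 5 * 2 ^ k := by
  induction k with
  | zero => rfl
  | succ k ih =>
    rw [show 2 * (k + 1) + 5 = 2 * k + 1 + 6 by ring, htBound_add_six,
      show 2 * k + 1 + 4 = 2 * k + 5 by ring, ih, pow_succ]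
    ring

lemma two_mul_htBound_le : ∀ m, 2 * htBound m ≤ htBound (m + 2)
  | 0 | 1 | 2 | 3 => by decide
  | m + 4 => (htBound_add_six m).ge

-- Each inequality below is preserved by `m ↦ m + 2` once all arguments are at least `4`, where
-- `htBound` doubles, so it reduces to the cases `m ≤ 5`.
lemma htBound_le_succ : ∀ m, htBound m ≤ htBound (m + 1)
  | 0 | 1 | 2 | 3 | 4 | 5 => by decide
  | m + 6 => by
    have h := htBound_le_succ (m + 4)
    have h₀ := htBound_add_six m
    have h₁ := htBound_add_six (m + 1)
    simp only [Nat.add_assoc, Nat.reduceAdd] at h h₁ ⊢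
    omega

lemma five_mul_htBound_le : ∀ m, 5 * htBound m ≤ htBound (m + 5)
  | 0 | 1 | 2 | 3 | 4 | 5 => by decide
  | m + 6 => by
    have h := five_mul_htBound_le (m + 4)
    have h₀ := htBound_add_six m
    have h₁ := htBound_add_six (m + 5)
    simp only [Nat.add_assoc, Nat.reduceAdd] at h h₁ ⊢
    omega

lemma htBound_mono : Monotone htBound := monotone_nat_of_le_succ htBound_le_succ

lemma succ_mul_htBound_le (d m : ℕ) (hd : d ≠ 2) : (d + 1) * htBound m ≤ htBound (m + d + 1) := by
  induction d using Nat.strong_induction_on with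
  | _ d ih =>
  match d, hd with
  | 0, _ => simpa using htBound_le_succ m
  | 1, _ => exact two_mul_htBound_le m
  | 2, h => exact absurd rfl h
  | 3, _ => calc
      4 * htBound m ≤ 2 * htBound (m + 2) := by linarith [two_mul_htBound_le m]
      _ ≤ htBound (m + 3 + 1) := two_mul_htBound_le (m + 2)
  | 4, _ => exact five_mul_htBound_le m
  | d + 5, _ => calc
      (d + 5 + 1) * htBound m ≤ 2 * ((d + 3 + 1) * htBound m) := by
        rw [← mul_assoc]
        exact Nat.mul_le_mul_right _ (by omega)
      _ ≤ 2 * htBound (m + (d + 3) + 1) := by gcongr; exact ih (d + 3) (by omega) (by omega)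
      _ ≤ htBound (m + (d + 5) + 1) := two_mul_htBound_le _

lemma two_mul_htBound_add_two_add_le : ∀ m, 2 * htBound (m + 2) + htBound m ≤ htBound (m + 5)
  | 0 | 1 | 2 | 3 | 4 | 5 => by decide
  | m + 6 => by
    have h := two_mul_htBound_add_two_add_le (m + 4)
    have h₀ := htBound_add_six m
    have h₁ := htBound_add_six (m + 2)
    have h₂ := htBound_add_six (m + 5)
    simp only [Nat.add_assoc, Nat.reduceAdd] at h h₁ h₂ ⊢
    omega

lemma htBound_add_three_add_two_add_le :
    ∀ m, htBound (m + 3) + htBound (m + 2) + 2 * htBound m ≤ htBound (m + 6)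
  | 0 | 1 | 2 | 3 | 4 | 5 => by decide
  | m + 6 => by
    have h := htBound_add_three_add_two_add_le (m + 4)
    have h₀ := htBound_add_six m
    have h₁ := htBound_add_six (m + 2)
    have h₂ := htBound_add_six (m + 3)
    have h₃ := htBound_add_six (m + 6)
    simp only [Nat.add_assoc, Nat.reduceAdd] at h h₁ h₂ h₃ ⊢
    omega

lemma htBound_add_add_two_add_le (d m : ℕ) (hd : 2 ≤ d) :
    htBound (m + d) + htBound (m + 2) + (d - 1) * htBound m ≤ htBound (m + d + 3) := by
  match d, hd with
  | 2, _ => linarith [two_mul_htBound_add_two_add_le m]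
  | 3, _ => linarith [htBound_add_three_add_two_add_le m]
  | d + 4, _ =>
    have h1 : (d + 3) * htBound m ≤ htBound (m + (d + 4)) :=
      (Nat.mul_le_mul_right _ (by omega)).trans (succ_mul_htBound_le (d + 3) m (by omega))
    rw [show d + 4 - 1 = d + 3 by omega]
    have h2 : htBound (m + 2) ≤ htBound (m + d + 2) := htBound_mono (by omega)
    have h3 := two_mul_htBound_add_two_add_le (m + d + 2)
    simp only [Nat.add_assoc, Nat.reduceAdd] at h1 h2 h3 ⊢
    omega

lemma htBound_sub_three_add_le {n d₁ d₂ i : ℕ} (hd₁ : 2 ≤ d₁) (hd : d₁ ≤ d₂) (hn : d₁ + 1 ≤ n)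
    (hi : i ≤ d₁ - 1) (hi' : i ≠ 0 → d₂ + 3 ≤ n) :
    htBound (n - 3) + htBound (n - (d₁ + 1)) + i * htBound (n - (d₂ + 3)) ≤ htBound n := by
  rcases eq_or_ne i 0 with rfl | hi0
  · have h1 := htBound_mono (show n - (d₁ + 1) ≤ n - 3 by omega)
    have h2 := two_mul_htBound_le (n - 3)
    have h3 := htBound_mono (show n - 3 + 2 ≤ n by omega)
    omega
  · obtain ⟨m, rfl⟩ : ∃ m, n = m + d₁ + 3 := ⟨n - (d₁ + 3), by have := hi' hi0; omega⟩
    have h1 : i * htBound (m + d₁ + 3 - (d₂ + 3)) ≤ (d₁ - 1) * htBound m :=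
      Nat.mul_le_mul hi (htBound_mono (by omega))
    have h2 := htBound_add_add_two_add_le d₁ m hd₁
    rw [show m + d₁ + 3 - 3 = m + d₁ by omega, show m + d₁ + 3 - (d₁ + 1) = m + 2 by omega]
    omega

variable {V : Type*}

def IsMaxIndepIn (G : SimpleGraph V) (W s : Finset V) : Prop :=
  s ⊆ W ∧ IsIndepFinset G s ∧ ∀ w ∈ W, w ∉ s → ∃ y ∈ s, G.Adj w y

lemma isMaxIndepFinset_iff (G : SimpleGraph V) (s : Finset V) :
    IsMaxIndepFinset G s ↔ IsIndepFinset G s ∧ ∀ w ∉ s, ∃ y ∈ s, G.Adj w y := by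
  classical
  refine ⟨fun ⟨hs, hmax⟩ => ⟨hs, fun w hw => ?_⟩, fun ⟨hs, hdom⟩ => ⟨hs, fun t ht hst => ?_⟩⟩
  · by_contra! hfree
    have hins : IsIndepFinset G (insert w s) := by
      simp only [IsIndepFinset, mem_insert]
      rintro a (rfl | ha) b (rfl | hb)
      exacts [G.loopless.irrefl _, hfree b hb, fun h => hfree a ha h.symm, hs ha hb]
    exact hw (hmax _ hins (subset_insert w s) ▸ mem_insert_self w s)
  · refine hst.antisymm fun x hx => ?_
    by_contra hxs
    obtain ⟨y, hy, hxy⟩ := hdom x hxs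
    exact ht hx (hst hy) hxy

lemma isMaxIndepIn_univ_iff [Fintype V] {G : SimpleGraph V} {s : Finset V} :
    IsMaxIndepIn G univ s ↔ IsMaxIndepFinset G s := by
  simp [IsMaxIndepIn, isMaxIndepFinset_iff]

section Window

variable (G : SimpleGraph V) [DecidableRel G.Adj]

def nbrIn (W : Finset V) (u : V) : Finset V := {x ∈ W | G.Adj u x}

variable [DecidableEq V]

instance (W : Finset V) : DecidablePred (IsMaxIndepIn G W) := fun _ => by
  unfold IsMaxIndepIn IsIndepFinset; infer_instance

def closedNbhdIn (W c : Finset V) : Finset V := {x ∈ W | x ∈ c ∨ ∃ y ∈ c, G.Adj y x}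

def maxIndepSetsIn (W : Finset V) : Finset (Finset V) := {s ∈ W.powerset | IsMaxIndepIn G W s}

end Window

section WindowLemmas

variable {G : SimpleGraph V} [DecidableRel G.Adj]

@[simp]
lemma mem_nbrIn {W : Finset V} {u x : V} : x ∈ nbrIn G W u ↔ x ∈ W ∧ G.Adj u x := mem_filter

variable [DecidableEq V]

@[simp]
lemma mem_maxIndepSetsIn {W s : Finset V} : s ∈ maxIndepSetsIn G W ↔ IsMaxIndepIn G W s := by
  simp only [maxIndepSetsIn, mem_filter, mem_powerset, and_iff_right_iff_imp]
  exact And.left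

lemma closedNbhdIn_subset {W c : Finset V} : closedNbhdIn G W c ⊆ W := filter_subset _ _

@[simp]
lemma mem_closedNbhdIn {W c : Finset V} {x : V} :
    x ∈ closedNbhdIn G W c ↔ x ∈ W ∧ (x ∈ c ∨ ∃ y ∈ c, G.Adj y x) := mem_filter

lemma mis_eq_card_maxIndepSetsIn [Fintype V] : mis G = #(maxIndepSetsIn G univ) := by
  rw [mis, ← Set.ncard_coe_finset]
  congr 1
  ext s
  simp [isMaxIndepIn_univ_iff]

lemma card_maxIndepSetsIn_empty_le : #(maxIndepSetsIn G ∅) ≤ 1 :=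
  (card_filter_le _ _).trans (by simp)

lemma exists_mem_nbrIn_of_notMem {W s : Finset V} {v : V} (hs : s ∈ maxIndepSetsIn G W)
    (hv : v ∈ W) (hvs : v ∉ s) : ∃ u ∈ nbrIn G W v, u ∈ s := by
  obtain ⟨hsW, -, hdom⟩ := mem_maxIndepSetsIn.mp hs
  obtain ⟨u, hu, hvu⟩ := hdom v hv hvs
  exact ⟨u, mem_nbrIn.mpr ⟨hsW hu, hvu⟩, hu⟩

lemma card_filter_superset_le (W c : Finset V) :
    #{s ∈ maxIndepSetsIn G W | c ⊆ s} ≤ #(maxIndepSetsIn G (W \ closedNbhdIn G W c)) := by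
  refine card_le_card_of_injOn (· \ c) (fun s hs => ?_) (fun s₁ hs₁ s₂ hs₂ h => ?_)
  · simp only [mem_coe, mem_filter, mem_maxIndepSetsIn] at hs
    obtain ⟨⟨hsW, hind, hdom⟩, hcs⟩ := hs
    simp only [mem_coe, mem_maxIndepSetsIn]
    refine ⟨fun x hx => ?_, fun a ha b hb => hind (sdiff_subset ha) (sdiff_subset hb),
      fun w hw hws => ?_⟩
    · simp only [mem_sdiff, mem_closedNbhdIn, not_and, not_or, not_exists] at hx ⊢
      exact ⟨hsW hx.1, fun _ => ⟨hx.2, fun y hy hyx => hind (hcs hy) hx.1 hyx⟩⟩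
    · simp only [mem_sdiff, mem_closedNbhdIn, not_and, not_or, not_exists] at hw hws
      obtain ⟨hwc, hwadj⟩ := hw.2 hw.1
      obtain ⟨y, hy, hwy⟩ := hdom w hw.1 fun h => hws h hwc
      exact ⟨y, mem_sdiff.mpr ⟨hy, fun hyc => hwadj y hyc hwy.symm⟩, hwy⟩
  · simp only [mem_coe, mem_filter] at hs₁ hs₂
    rw [← sdiff_union_of_subset hs₁.2, ← sdiff_union_of_subset hs₂.2]
    exact congrArg (· ∪ c) h

end WindowLemmas

section UpperBound

variable {G : SimpleGraph V} [DecidableRel G.Adj] [DecidableEq V] {W : Finset V}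

lemma card_nbrIn_add_one_le {u : V} (hu : u ∈ W) :
    #(nbrIn G W u) + 1 ≤ #(closedNbhdIn G W {u}) := by
  rw [← card_insert_of_notMem fun h => G.loopless.irrefl u (mem_nbrIn.mp h).2]
  refine card_le_card fun x hx => ?_
  rcases mem_insert.mp hx with rfl | hx
  · simp [hu]
  · simp_all

lemma card_nbrIn_add_three_le {u₁ u₂ w : V} (hu₁ : u₁ ∈ W) (hu₂ : u₂ ∈ W) (hw : w ∈ W)
    (h₁₂ : ¬ G.Adj u₁ u₂) (hne : u₁ ≠ u₂) (h₁w : G.Adj u₁ w) (h₂w : ¬ G.Adj u₂ w) :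
    #(nbrIn G W u₂) + 3 ≤ #(closedNbhdIn G W {u₂, w}) := by
  have hu₂' : u₂ ∉ nbrIn G W u₂ := fun h => G.loopless.irrefl u₂ (mem_nbrIn.mp h).2
  have hu₁' : u₁ ∉ insert u₂ (nbrIn G W u₂) := by
    simp only [mem_insert, mem_nbrIn, not_or]
    exact ⟨hne, fun h => h₁₂ h.2.symm⟩
  have hw' : w ∉ insert u₁ (insert u₂ (nbrIn G W u₂)) := by
    simp only [mem_insert, mem_nbrIn, not_or]
    exact ⟨(G.ne_of_adj h₁w).symm, fun h => h₁₂ (h ▸ h₁w), fun h => h₂w h.2⟩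
  calc #(nbrIn G W u₂) + 3 = #(insert w (insert u₁ (insert u₂ (nbrIn G W u₂)))) := by
        rw [card_insert_of_notMem hw', card_insert_of_notMem hu₁', card_insert_of_notMem hu₂']
    _ ≤ #(closedNbhdIn G W {u₂, w}) := by
        refine card_le_card fun x hx => ?_
        simp only [mem_insert, mem_nbrIn] at hx
        rcases hx with rfl | rfl | rfl | ⟨hxW, hx⟩
        · simp [hw]
        · simp [hu₁, h₁w.symm]
        · simp [hu₂]
        · simp [hxW, hx]

lemma card_filter_superset_le_htBound (ih : ∀ W' ⊂ W, #(maxIndepSetsIn G W') ≤ htBound #W')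
    {c : Finset V} (hc : c.Nonempty) (hcW : c ⊆ W) {k : ℕ} (hk : k ≤ #(closedNbhdIn G W c)) :
    #{s ∈ maxIndepSetsIn G W | c ⊆ s} ≤ htBound (#W - k) := by
  have hsub : closedNbhdIn G W c ⊆ W := closedNbhdIn_subset
  have hne : (closedNbhdIn G W c).Nonempty :=
    hc.mono fun x hx => mem_closedNbhdIn.mpr ⟨hcW hx, .inl hx⟩
  calc _ ≤ #(maxIndepSetsIn G (W \ closedNbhdIn G W c)) := card_filter_superset_le W c
    _ ≤ htBound #(W \ closedNbhdIn G W c) := ih _ (sdiff_ssubset hsub hne)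
    _ ≤ htBound (#W - k) := htBound_mono (by rw [card_sdiff_of_subset hsub]; omega)

lemma card_filter_mem_le_htBound (ih : ∀ W' ⊂ W, #(maxIndepSetsIn G W') ≤ htBound #W')
    {u : V} (hu : u ∈ W) :
    #{s ∈ maxIndepSetsIn G W | u ∈ s} ≤ htBound (#W - (#(nbrIn G W u) + 1)) := by
  simpa only [singleton_subset_iff] using card_filter_superset_le_htBound ih
    (singleton_nonempty u) (singleton_subset_iff.mpr hu) (card_nbrIn_add_one_le hu)

lemma card_maxIndepSetsIn_le_succ_mul (ih : ∀ W' ⊂ W, #(maxIndepSetsIn G W') ≤ htBound #W')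
    {v : V} (hv : v ∈ W) (hmin : ∀ u ∈ W, #(nbrIn G W v) ≤ #(nbrIn G W u)) :
    #(maxIndepSetsIn G W) ≤ (#(nbrIn G W v) + 1) * htBound (#W - (#(nbrIn G W v) + 1)) := by
  have hcover : maxIndepSetsIn G W ⊆
      (insert v (nbrIn G W v)).biUnion fun u => {s ∈ maxIndepSetsIn G W | u ∈ s} := by
    intro s hs
    simp only [mem_biUnion, mem_insert, mem_filter]
    by_cases hvs : v ∈ s
    · exact ⟨v, .inl rfl, hs, hvs⟩
    · obtain ⟨u, hu, hus⟩ := exists_mem_nbrIn_of_notMem hs hv hvs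
      exact ⟨u, .inr hu, hs, hus⟩
  calc #(maxIndepSetsIn G W)
      ≤ ∑ u ∈ insert v (nbrIn G W v), #{s ∈ maxIndepSetsIn G W | u ∈ s} :=
        (card_le_card hcover).trans card_biUnion_le
    _ ≤ ∑ _u ∈ insert v (nbrIn G W v), htBound (#W - (#(nbrIn G W v) + 1)) := by
        refine sum_le_sum fun u hu => ?_
        have huW : u ∈ W := by
          rcases mem_insert.mp hu with rfl | hu
          exacts [hv, (mem_nbrIn.mp hu).1]
        have := hmin u huW
        exact (card_filter_mem_le_htBound ih huW).trans (htBound_mono (by omega))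
    _ = _ := by
        rw [sum_const, smul_eq_mul,
          card_insert_of_notMem fun h => G.loopless.irrefl v (mem_nbrIn.mp h).2]

lemma maxIndepSetsIn_subset_of_nbrIn_eq_pair {v u₁ u₂ : V} (hv : v ∈ W)
    (hnbr : nbrIn G W v = {u₁, u₂}) :
    maxIndepSetsIn G W ⊆ {s ∈ maxIndepSetsIn G W | v ∈ s} ∪ {s ∈ maxIndepSetsIn G W | u₁ ∈ s} ∪
      {w ∈ (nbrIn G W u₁).erase v | ¬ G.Adj u₂ w}.biUnion
        fun w => {s ∈ maxIndepSetsIn G W | {u₂, w} ⊆ s} := by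
  intro s hs
  simp only [mem_union, mem_filter, mem_biUnion, mem_erase, insert_subset_iff,
    singleton_subset_iff]
  by_cases hvs : v ∈ s
  · exact .inl (.inl ⟨hs, hvs⟩)
  by_cases hu₁s : u₁ ∈ s
  · exact .inl (.inr ⟨hs, hu₁s⟩)
  obtain ⟨u, hu, hus⟩ := exists_mem_nbrIn_of_notMem hs hv hvs
  have hu₂s : u₂ ∈ s := by
    rw [hnbr, mem_insert, mem_singleton] at hu
    rcases hu with rfl | rfl
    exacts [absurd hus hu₁s, hus]
  have hu₁ : u₁ ∈ W := (mem_nbrIn.mp (hnbr ▸ mem_insert_self u₁ {u₂})).1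
  obtain ⟨w, hw, hws⟩ := exists_mem_nbrIn_of_notMem hs hu₁ hu₁s
  have hind := (mem_maxIndepSetsIn.mp hs).2.1
  exact .inr ⟨w, ⟨⟨fun h => hvs (h ▸ hws), hw⟩, hind hu₂s hws⟩, hs, hu₂s, hws⟩

lemma card_maxIndepSetsIn_le_of_nbrIn_eq_pair
    (ih : ∀ W' ⊂ W, #(maxIndepSetsIn G W') ≤ htBound #W') {v u₁ u₂ : V} (hv : v ∈ W)
    (hmin : ∀ u ∈ W, #(nbrIn G W v) ≤ #(nbrIn G W u)) (hnbr : nbrIn G W v = {u₁, u₂})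
    (hne : u₁ ≠ u₂) (h₁₂ : ¬ G.Adj u₁ u₂) (hd : #(nbrIn G W u₁) ≤ #(nbrIn G W u₂)) :
    #(maxIndepSetsIn G W) ≤ htBound #W := by
  have hdv : #(nbrIn G W v) = 2 := by rw [hnbr, card_pair hne]
  have hu₁v : u₁ ∈ nbrIn G W v := hnbr ▸ mem_insert_self u₁ {u₂}
  have hu₂v : u₂ ∈ nbrIn G W v := hnbr ▸ mem_insert_of_mem (mem_singleton_self u₂)
  have hu₁ := (mem_nbrIn.mp hu₁v).1
  have hu₂ := (mem_nbrIn.mp hu₂v).1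
  set I := {w ∈ (nbrIn G W u₁).erase v | ¬ G.Adj u₂ w}
  have hpair : ∀ w ∈ I, #(nbrIn G W u₂) + 3 ≤ #(closedNbhdIn G W {u₂, w}) := by
    intro w hw
    simp only [I, mem_filter, mem_erase, mem_nbrIn] at hw
    exact card_nbrIn_add_three_le hu₁ hu₂ hw.1.2.1 h₁₂ hne hw.1.2.2 hw.2
  have hcard : #(maxIndepSetsIn G W) ≤ htBound (#W - 3) + htBound (#W - (#(nbrIn G W u₁) + 1))
      + #I * htBound (#W - (#(nbrIn G W u₂) + 3)) := by
    have hv' := card_filter_mem_le_htBound ih hv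
    rw [hdv] at hv'
    calc _ ≤ _ := card_le_card (maxIndepSetsIn_subset_of_nbrIn_eq_pair hv hnbr)
      _ ≤ _ := (card_union_le _ _).trans (add_le_add (card_union_le _ _) card_biUnion_le)
      _ ≤ _ := add_le_add (add_le_add hv' (card_filter_mem_le_htBound ih hu₁))
          (sum_le_sum fun w hw => card_filter_superset_le_htBound ih (insert_nonempty _ _)
            (insert_subset hu₂ (singleton_subset_iff.mpr (mem_nbrIn.mp
              (mem_of_mem_erase (mem_of_mem_filter w hw))).1)) (hpair w hw))
      _ = _ := by rw [sum_const, smul_eq_mul]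
  refine hcard.trans (htBound_sub_three_add_le (hdv ▸ hmin u₁ hu₁) hd ?_ ?_ fun hI => ?_)
  · exact (card_nbrIn_add_one_le hu₁).trans (card_le_card closedNbhdIn_subset)
  · exact (card_filter_le _ _).trans
      (card_erase_of_mem (mem_nbrIn.mpr ⟨hv, (mem_nbrIn.mp hu₁v).2.symm⟩)).le
  · obtain ⟨w, hw⟩ := card_pos.mp (Nat.pos_of_ne_zero hI)
    exact (hpair w hw).trans (card_le_card closedNbhdIn_subset)

theorem card_maxIndepSetsIn_le_htBound (hG : G.CliqueFree 3) (W : Finset V) :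
    #(maxIndepSetsIn G W) ≤ htBound #W := by
  induction W using Finset.strongInduction with
  | H W ih =>
  rcases W.eq_empty_or_nonempty with rfl | hW
  · exact card_maxIndepSetsIn_empty_le
  obtain ⟨v, hv, hmin⟩ := W.exists_min_image (fun u => #(nbrIn G W u)) hW
  by_cases hdv : #(nbrIn G W v) = 2
  · obtain ⟨u₁, u₂, hne, hnbr⟩ := card_eq_two.mp hdv
    have hvu₁ : G.Adj v u₁ := (mem_nbrIn.mp (hnbr ▸ mem_insert_self u₁ {u₂})).2
    have hvu₂ : G.Adj v u₂ := (mem_nbrIn.mp (hnbr ▸ mem_insert_of_mem (mem_singleton_self u₂))).2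
    have h₁₂ : ¬ G.Adj u₁ u₂ := fun h =>
      hG {v, u₁, u₂} (is3Clique_triple_iff.mpr ⟨hvu₁, hvu₂, h⟩)
    rcases le_total #(nbrIn G W u₁) #(nbrIn G W u₂) with hd | hd
    · exact card_maxIndepSetsIn_le_of_nbrIn_eq_pair ih hv hmin hnbr hne h₁₂ hd
    · exact card_maxIndepSetsIn_le_of_nbrIn_eq_pair ih hv hmin (hnbr.trans (pair_comm _ _))
        hne.symm (fun h => h₁₂ h.symm) hd
  · have hn : #(nbrIn G W v) + 1 ≤ #W :=
      (card_nbrIn_add_one_le hv).trans (card_le_card closedNbhdIn_subset)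
    calc _ ≤ _ := card_maxIndepSetsIn_le_succ_mul ih hv hmin
      _ ≤ htBound (#W - (#(nbrIn G W v) + 1) + #(nbrIn G W v) + 1) :=
          succ_mul_htBound_le _ _ hdv
      _ = htBound #W := by congr 1; omega

end UpperBound

theorem mis_le_htBound [Fintype V] {G : SimpleGraph V} (hG : G.CliqueFree 3) :
    mis G ≤ htBound (Fintype.card V) := by
  classical
  simpa [mis_eq_card_maxIndepSetsIn] using card_maxIndepSetsIn_le_htBound hG univ

section Construction

variable {W : Type*} {G : SimpleGraph V} {H : SimpleGraph W}

lemma isMaxIndepFinset_sum_iff (s : Finset (V ⊕ W)) :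
    IsMaxIndepFinset (G ⊕g H) s ↔ IsMaxIndepFinset G s.toLeft ∧ IsMaxIndepFinset H s.toRight := by
  simp [isMaxIndepFinset_iff, IsIndepFinset, Sum.forall, Sum.exists, SimpleGraph.sum]
  tauto

lemma mis_sum : mis (G ⊕g H) = mis G * mis H := by
  have : {s | IsMaxIndepFinset (G ⊕g H) s} =
      Finset.sumEquiv ⁻¹' ({s | IsMaxIndepFinset G s} ×ˢ {s | IsMaxIndepFinset H s}) := by
    ext s
    simp [isMaxIndepFinset_sum_iff]
  rw [mis, this, Set.ncard_preimage_of_injective_subset_range Finset.sumEquiv.injective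
    (by simp [Finset.sumEquiv.surjective.range_eq]), Set.ncard_prod]
  rfl

lemma SimpleGraph.Iso.isMaxIndepFinset_map_iff (e : G ≃g H) (s : Finset V) :
    IsMaxIndepFinset H (s.map e.toEquiv.toEmbedding) ↔ IsMaxIndepFinset G s := by
  simp [isMaxIndepFinset_iff, IsIndepFinset, e.surjective.forall, e.surjective.exists,
    e.map_adj_iff, -mem_map_equiv]

lemma SimpleGraph.Iso.mis_eq (e : G ≃g H) : mis G = mis H := by
  have : {s | IsMaxIndepFinset G s} =
      e.toEquiv.finsetCongr ⁻¹' {t | IsMaxIndepFinset H t} := by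
    ext s
    simp [← e.isMaxIndepFinset_map_iff]
  rw [mis, mis, this, Set.ncard_preimage_of_injective_subset_range e.toEquiv.finsetCongr.injective
    (by simp [e.toEquiv.finsetCongr.surjective.range_eq])]

lemma cliqueFree_three_sum (hG : G.CliqueFree 3) (hH : H.CliqueFree 3) :
    (G ⊕g H).CliqueFree 3 := by
  classical
  intro t ht
  obtain ⟨a, b, c, hab, hac, hbc, -⟩ := is3Clique_iff.mp ht
  rcases a with a | a <;> rcases b with b | b <;> rcases c with c | c <;>
    simp [SimpleGraph.sum] at hab hac hbc
  · exact hG {a, b, c} (is3Clique_triple_iff.mpr ⟨hab, hac, hbc⟩)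
  · exact hH {a, b, c} (is3Clique_triple_iff.mpr ⟨hab, hac, hbc⟩)

def extremalGraph : (k : ℕ) → SimpleGraph (Fin (2 * k + 5))
  | 0 => cycleGraph 5
  | k + 1 => (extremalGraph k ⊕g (⊤ : SimpleGraph (Fin 2))).map (finSumFinEquiv (m := 2 * k + 5))

lemma cliqueFree_extremalGraph (k : ℕ) : (extremalGraph k).CliqueFree 3 := by
  induction k with
  | zero =>
    have : ∀ a b c : Fin 5, (cycleGraph 5).Adj a b → (cycleGraph 5).Adj a c →
        ¬ (cycleGraph 5).Adj b c := by decide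
    intro t ht
    obtain ⟨a, b, c, hab, hac, hbc, -⟩ := is3Clique_iff.mp ht
    exact this a b c hab hac hbc
  | succ k ih =>
    exact (cliqueFree_map_iff (f := finSumFinEquiv.toEmbedding)).mpr
      (cliqueFree_three_sum ih (cliqueFree_of_card_lt (G := ⊤) (by simp)))

lemma mis_extremalGraph (k : ℕ) : mis (extremalGraph k) = 5 * 2 ^ k := by
  induction k with
  | zero =>
    rw [extremalGraph, mis_eq_card_maxIndepSetsIn]
    decide
  | succ k ih =>
    have htop : mis (⊤ : SimpleGraph (Fin 2)) = 2 := by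
      rw [mis_eq_card_maxIndepSetsIn]
      decide
    rw [extremalGraph, ← (Iso.map _ _).mis_eq, mis_sum, ih, htop, pow_succ, mul_assoc]

end Construction

theorem hujter_tuza_odd (n : ℕ) (hn : 5 ≤ n) (hodd : Odd n) :
    (∀ G : SimpleGraph (Fin n), G.CliqueFree 3 → mis G ≤ 5 * 2 ^ ((n - 5) / 2)) ∧
    (∃ G : SimpleGraph (Fin n), G.CliqueFree 3 ∧ mis G = 5 * 2 ^ ((n - 5) / 2)) := by
  obtain ⟨k, rfl⟩ : ∃ k, n = 2 * k + 5 := by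
    obtain ⟨m, rfl⟩ := hodd
    exact ⟨m - 2, by omega⟩
  rw [show (2 * k + 5 - 5) / 2 = k by omega, ← htBound_two_mul_add_five]
  refine ⟨fun G hG => ?_, extremalGraph k, cliqueFree_extremalGraph k, ?_⟩
  · simpa using mis_le_htBound hG
  · rw [mis_extremalGraph, htBound_two_mul_add_five]
end

section
/- For every ε > 0 there exists δ > 0 such that for every positive integer n, every simple graph G on n vertices that contains no induced triangle matching of size k for any integer k ≥ (1−ε)·n/3 satisfies mis(G) < 2^{((log₂ 3)/3 − δ)·n}. -/
/-!
For a graph on `n` vertices with no induced triangle matching of size `t + 1` we show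
`mis G ≤ 3 ^ t * 2 ^ ((n - 3 t) / 2)`; when `3 t < (1 - ε) n` this is below
`2 ^ ((log₂ 3 / 3 - δ) n)` for `δ = (log₂ 3 / 3 - 1 / 2) ε`, and `log₂ 3 / 3 > 1 / 2` as `9 > 8`.

The bound is proved by induction on `n`, branching on a vertex `v` whose closed neighbourhood
`N[v]` is smallest, of size `m`. Every maximal independent set meets `N[v]`, and those through
`u` avoiding `W` are determined by their traces, which are maximal independent in
`G - (N[u] ∪ W)`; deleting `s` vertices divides the bound by `2 ^ (s / 2)`. For `m ≠ 3` the
`m` branches cost at most `m 2 ^ (-m / 2) ≤ 1`. For `N[v] = {v, a, b}` one branches on `v`, on `b`,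
and on `a` but not `b`, which removes at least `3, 3, 4` vertices, unless `N[v]` is a triangle
component; then deleting it lowers `t` by one and `mis` by exactly the factor `3`.
-/

open Finset Real

open scoped Classical

variable {V : Type*}

section MaximalIndependentSets

variable {G : SimpleGraph V}

theorem mis_of_isEmpty [IsEmpty V] : mis G = 1 := by
  refine Set.ncard_eq_one.mpr ⟨∅, Set.eq_singleton_iff_unique_mem.mpr ⟨?_, ?_⟩⟩
  · exact ⟨fun a => isEmptyElim a, fun t _ _ => Subsingleton.elim _ _⟩
  · exact fun s _ => Subsingleton.elim _ _

theorem IsMaxIndepFinset.exists_adj {s : Finset V} (hs : IsMaxIndepFinset G s) {y : V}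
    (hy : y ∉ s) : ∃ x ∈ s, G.Adj y x := by
  by_contra! hyx
  have hind : IsIndepFinset G (insert y s) := by
    intro a ha b hb
    rcases mem_insert.mp ha with rfl | ha' <;> rcases mem_insert.mp hb with rfl | hb'
    · exact G.loopless.irrefl _
    · exact hyx b hb'
    · exact fun h => hyx a ha' h.symm
    · exact hs.1 ha' hb'
  exact hy (hs.2 _ hind (subset_insert y s) ▸ mem_insert_self y s)

variable [Fintype V] (G)

noncomputable def maxIndepSets : Finset (Finset V) := {s | IsMaxIndepFinset G s}

noncomputable def closedNbhd (v : V) : Finset V := insert v (G.neighborFinset v)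

/-- `N[v]` is a connected component of `G` and a clique. -/
def IsCliqueComponent (v : V) : Prop :=
  ∀ x ∈ closedNbhd G v, closedNbhd G x = closedNbhd G v

noncomputable def misBranch (u : V) (W : Finset V) : Finset (Finset V) :=
  {s ∈ maxIndepSets G | u ∈ s ∧ Disjoint s W}

variable {G}

theorem mis_eq_card_maxIndepSets : mis G = #(maxIndepSets G) := by
  rw [mis, ← Set.ncard_coe_finset]
  congr
  ext
  simp [maxIndepSets]

theorem mem_maxIndepSets {s : Finset V} : s ∈ maxIndepSets G ↔ IsMaxIndepFinset G s := by
  simp [maxIndepSets]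

theorem mem_closedNbhd {v x : V} : x ∈ closedNbhd G v ↔ x = v ∨ G.Adj v x := by
  simp [closedNbhd]

theorem self_mem_closedNbhd (v : V) : v ∈ closedNbhd G v := mem_insert_self _ _

theorem IsMaxIndepFinset.exists_mem_closedNbhd {s : Finset V} (hs : IsMaxIndepFinset G s)
    (v : V) : ∃ u ∈ closedNbhd G v, u ∈ s := by
  by_cases hv : v ∈ s
  · exact ⟨v, self_mem_closedNbhd v, hv⟩
  · obtain ⟨x, hx, hvx⟩ := hs.exists_adj hv
    exact ⟨x, mem_closedNbhd.mpr (Or.inr hvx), hx⟩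

theorem maxIndepSets_subset_biUnion_misBranch (v : V) :
    maxIndepSets G ⊆ (closedNbhd G v).biUnion (misBranch G · ∅) := by
  intro s hs
  obtain ⟨u, hu, hus⟩ := (mem_maxIndepSets.mp hs).exists_mem_closedNbhd v
  exact mem_biUnion.mpr ⟨u, hu, mem_filter.mpr ⟨hs, hus, disjoint_empty_right s⟩⟩

theorem misBranch_eq_insert_filter {u : V} {W s : Finset V} (hs : s ∈ misBranch G u W) :
    s = insert u {x ∈ s | x ∉ closedNbhd G u ∪ W} := by
  obtain ⟨hs, hus, hsW⟩ := mem_filter.mp hs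
  ext x
  simp only [mem_insert, mem_filter]
  constructor
  · intro hx
    by_cases hxu : x = u
    · exact Or.inl hxu
    refine Or.inr ⟨hx, fun hxN => ?_⟩
    rcases mem_union.mp hxN with hxN | hxW
    · rcases mem_closedNbhd.mp hxN with hxu' | hux
      · exact hxu hxu'
      · exact (mem_maxIndepSets.mp hs).1 hus hx hux
    · exact disjoint_left.mp hsW hx hxW
  · rintro (rfl | ⟨hx, -⟩) <;> assumption

theorem isMaxIndepFinset_induce_of_mem_misBranch {u : V} {W s : Finset V}
    (hs : s ∈ misBranch G u W) :
    IsMaxIndepFinset (G.induce ↑(closedNbhd G u ∪ W)ᶜ) {x | ↑x ∈ s} := by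
  have hmax := mem_maxIndepSets.mp (mem_filter.mp hs).1
  refine ⟨fun a ha b hb => hmax.1 (by simpa using ha) (by simpa using hb), fun t ht hst => ?_⟩
  refine Subset.antisymm hst fun y hyt => ?_
  by_contra hys
  obtain ⟨x, hxs, hyx⟩ := hmax.exists_adj (by simpa using hys)
  rcases mem_insert.mp (misBranch_eq_insert_filter hs ▸ hxs) with rfl | hxC
  · exact (mem_compl.mp y.2) (mem_union_left _ (mem_closedNbhd.mpr (Or.inr hyx.symm)))
  · have hxt : (⟨x, by simpa using (mem_filter.mp hxC).2⟩ : ↥(↑(closedNbhd G u ∪ W)ᶜ : Set V))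
        ∈ t := hst (by simpa using hxs)
    exact ht hyt hxt hyx

theorem card_misBranch_le (u : V) (W : Finset V) :
    #(misBranch G u W) ≤ mis (G.induce ↑(closedNbhd G u ∪ W)ᶜ) := by
  have htrace (s : Finset V) : {x ∈ s | x ∉ closedNbhd G u ∪ W} =
      ({x | ↑x ∈ s} : Finset ↥(↑(closedNbhd G u ∪ W)ᶜ : Set V)).map
        (Function.Embedding.subtype _) := by
    ext
    simp
  rw [mis_eq_card_maxIndepSets]
  refine card_le_card_of_injOn (fun s => ({x | ↑x ∈ s} : Finset _))
    (fun s hs => mem_maxIndepSets.mpr (isMaxIndepFinset_induce_of_mem_misBranch hs))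
    (fun s hs s' hs' h => ?_)
  rw [misBranch_eq_insert_filter hs, misBranch_eq_insert_filter hs', htrace, htrace]
  exact congrArg (fun r => insert u (r.map (Function.Embedding.subtype _))) h

end MaximalIndependentSets

section InducedTriangleMatchings

variable {W : Type*} {G : SimpleGraph V} {H : SimpleGraph W}

def IsInducedTriangleMatching (G : SimpleGraph V) {k : ℕ} (F : Fin k → Finset V) : Prop :=
  (∀ i, #(F i) = 3) ∧
    (∀ i j, i ≠ j → Disjoint (F i) (F j)) ∧
    (∀ i, ∀ a ∈ F i, ∀ b ∈ F i, a ≠ b → G.Adj a b) ∧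
    (∀ i j, i ≠ j → ∀ a ∈ F i, ∀ b ∈ F j, ¬ G.Adj a b)

theorem hasInducedTriangleMatching_zero : HasInducedTriangleMatching G 0 :=
  ⟨Fin.elim0, fun i => i.elim0, fun i => i.elim0, fun i => i.elim0, fun i => i.elim0⟩

theorem IsInducedTriangleMatching.map {k : ℕ} {F : Fin k → Finset V}
    (hF : IsInducedTriangleMatching G F) (f : G ↪g H) :
    IsInducedTriangleMatching H fun i => (F i).map f.toEmbedding := by
  obtain ⟨hcard, hdisj, hadj, hnadj⟩ := hF
  refine ⟨fun i => by simpa using hcard i, fun i j hij => by simpa using hdisj i j hij, ?_, ?_⟩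
  · simp only [mem_map]
    rintro i _ ⟨a, ha, rfl⟩ _ ⟨b, hb, rfl⟩ hab
    exact f.map_adj_iff.mpr (hadj i a ha b hb (ne_of_apply_ne _ hab))
  · simp only [mem_map]
    rintro i j hij _ ⟨a, ha, rfl⟩ _ ⟨b, hb, rfl⟩
    exact f.map_adj_iff.not.mpr (hnadj i j hij a ha b hb)

theorem HasInducedTriangleMatching.map {k : ℕ} (h : HasInducedTriangleMatching G k)
    (f : G ↪g H) : HasInducedTriangleMatching H k :=
  let ⟨F, hF⟩ := h
  ⟨_, IsInducedTriangleMatching.map (F := F) hF f⟩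

theorem IsInducedTriangleMatching.cons {k : ℕ} {F : Fin k → Finset V}
    (hF : IsInducedTriangleMatching G F) {T : Finset V} (hT : #T = 3)
    (hTadj : ∀ a ∈ T, ∀ b ∈ T, a ≠ b → G.Adj a b) (hTout : ∀ a ∈ T, ∀ b, G.Adj a b → b ∈ T)
    (hTF : ∀ i, Disjoint T (F i)) :
    IsInducedTriangleMatching G (Fin.cons T F : Fin (k + 1) → Finset V) := by
  obtain ⟨hcard, hdisj, hadj, hnadj⟩ := hF
  refine ⟨Fin.cases hT hcard, fun i j hij => ?_, Fin.cases hTadj hadj, fun i j hij => ?_⟩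
  · cases i using Fin.cases <;> cases j using Fin.cases
    · exact absurd rfl hij
    · exact hTF _
    · exact (hTF _).symm
    · exact hdisj _ _ (ne_of_apply_ne Fin.succ hij)
  · cases i using Fin.cases <;> cases j using Fin.cases
    · exact absurd rfl hij
    · exact fun a ha b hb hab => disjoint_left.mp (hTF _) (hTout a ha b hab) hb
    · exact fun a ha b hb hab => disjoint_left.mp (hTF _) (hTout b hb a hab.symm) ha
    · exact hnadj _ _ (ne_of_apply_ne Fin.succ hij)

end InducedTriangleMatchings

variable [Fintype V]

section CliqueComponents

variable {G : SimpleGraph V} {v : V}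

theorem card_maxIndepSets_le_of_closedNbhd_eq
    (hT : IsCliqueComponent G v) :
    #(maxIndepSets G) ≤ #(closedNbhd G v) * mis (G.induce ↑(closedNbhd G v)ᶜ) := by
  calc #(maxIndepSets G) ≤ ∑ u ∈ closedNbhd G v, #(misBranch G u ∅) :=
        (card_le_card (maxIndepSets_subset_biUnion_misBranch v)).trans card_biUnion_le
    _ ≤ ∑ _u ∈ closedNbhd G v, mis (G.induce ↑(closedNbhd G v)ᶜ) :=
        sum_le_sum fun u hu => (union_empty _).trans (hT u hu) ▸ card_misBranch_le u ∅
    _ = _ := by rw [sum_const, smul_eq_mul]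

theorem HasInducedTriangleMatching.of_induce_compl_closedNbhd (h3 : #(closedNbhd G v) = 3)
    (hT : IsCliqueComponent G v) {k : ℕ}
    (h : HasInducedTriangleMatching (G.induce ↑(closedNbhd G v)ᶜ) k) :
    HasInducedTriangleMatching G (k + 1) := by
  obtain ⟨F, hF⟩ := h
  refine ⟨_, IsInducedTriangleMatching.cons (IsInducedTriangleMatching.map (F := F) hF
    (SimpleGraph.Embedding.induce _)) h3 ?_ ?_ ?_⟩
  · intro a ha b hb hab
    rw [← hT a ha, mem_closedNbhd] at hb
    exact hb.resolve_left hab.symm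
  · exact fun a ha b hab => hT a ha ▸ mem_closedNbhd.mpr (Or.inr hab)
  · intro i
    rw [disjoint_left]
    intro a ha
    simp only [mem_map, not_exists, not_and]
    rintro ⟨b, hb⟩ - rfl
    exact mem_compl.mp hb ha

end CliqueComponents

section MisBound

theorem sq_le_two_pow_of_ne_three {m : ℕ} (hm : m ≠ 3) : m ^ 2 ≤ 2 ^ m := by
  rcases lt_or_ge m 4 with h | h
  · interval_cases m <;> simp_all
  · induction m, h using Nat.le_induction with
    | base => norm_num
    | succ k hk ih => rw [pow_succ 2]; nlinarith [ih (by omega)]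

theorem inv_sqrt_two_sq : (√2)⁻¹ ^ 2 = 2⁻¹ := by
  rw [inv_pow, sq_sqrt zero_le_two]

theorem inv_sqrt_two_pow_antitone : Antitone ((√2)⁻¹ ^ · : ℕ → ℝ) :=
  fun _ _ h => pow_le_pow_of_le_one (by positivity) (inv_le_one_of_one_le₀ one_lt_sqrt_two.le) h

theorem natCast_mul_inv_sqrt_two_pow_le_one {m : ℕ} (hm : m ≠ 3) : (m : ℝ) * (√2)⁻¹ ^ m ≤ 1 := by
  rw [← pow_le_one_iff_of_nonneg (by positivity) two_ne_zero, mul_pow, ← pow_mul, mul_comm m,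
    pow_mul, inv_sqrt_two_sq, inv_pow, ← div_eq_mul_inv, div_le_one (by positivity)]
  exact_mod_cast sq_le_two_pow_of_ne_three hm

theorem two_mul_inv_sqrt_two_pow_three_add_pow_four_le_one : 2 * (√2)⁻¹ ^ 3 + (√2)⁻¹ ^ 4 ≤ 1 := by
  have h : (√2)⁻¹ ≤ 3 / 4 := by
    rw [inv_le_comm₀ (by positivity) (by norm_num), le_sqrt (by norm_num) zero_le_two]
    norm_num
  have h2 := inv_sqrt_two_sq
  nlinarith

/-- For even `n - 3 t ≥ 0`, the number of maximal independent sets of `t` disjoint triangles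
together with a perfect matching on the other `n - 3 t` vertices. -/
noncomputable def misBound (n t : ℕ) : ℝ := 3 ^ t * √2 ^ ((n : ℤ) - 3 * t)

theorem misBound_nonneg (n t : ℕ) : 0 ≤ misBound n t := by
  unfold misBound; positivity

theorem misBound_sub {n s : ℕ} (t : ℕ) (hs : s ≤ n) :
    misBound (n - s) t = (√2)⁻¹ ^ s * misBound n t := by
  have : ((n - s : ℕ) : ℤ) - 3 * t = ((n : ℤ) - 3 * t) - s := by omega
  rw [misBound, misBound, this, zpow_sub₀ (by positivity), zpow_natCast, inv_pow]
  ring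

theorem three_mul_misBound_sub_three {n : ℕ} (t : ℕ) (hn : 3 ≤ n) :
    3 * misBound (n - 3) t = misBound n (t + 1) := by
  rw [misBound, misBound, Nat.cast_sub hn]
  push_cast
  ring_nf

theorem one_le_misBound_zero (t : ℕ) : 1 ≤ misBound 0 t := by
  have h : √2 ^ 3 ≤ 3 := by
    nlinarith [sq_sqrt (zero_le_two : (0:ℝ) ≤ 2), sqrt_nonneg 2]
  rw [misBound, Nat.cast_zero, zero_sub, zpow_neg, zpow_mul, zpow_natCast, zpow_ofNat,
    ← inv_pow, ← mul_pow]
  exact one_le_pow₀ (by rw [← div_eq_mul_inv, one_le_div (by positivity)]; exact_mod_cast h)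

theorem misBound_eq_two_rpow (n t : ℕ) :
    misBound n t = 2 ^ (logb 2 3 * t + ((n : ℝ) - 3 * t) / 2) := by
  rw [misBound, rpow_add two_pos, rpow_mul zero_le_two, rpow_logb two_pos (by norm_num)
    (by norm_num), rpow_natCast, sqrt_eq_rpow, ← rpow_intCast, ← rpow_mul zero_le_two]
  push_cast
  ring_nf

theorem one_half_lt_logb_two_three_div_three : 1 / 2 < logb 2 3 / 3 := by
  rw [logb, div_div, lt_div_iff₀ (by positivity), ← sub_pos]
  have : log 8 < log 9 := log_lt_log (by norm_num) (by norm_num)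
  rw [show (8 : ℝ) = 2 ^ 3 by norm_num, show (9 : ℝ) = 3 ^ 2 by norm_num, log_pow, log_pow] at this
  push_cast at this
  linarith

end MisBound

section Branching

variable {G : SimpleGraph V} {R : ℝ}

theorem closedNbhd_eq_of_card_union_singleton_le {v a b : V}
    (hN : closedNbhd G v = {v, a, b}) (hva : G.Adj v a)
    (hmin : #(closedNbhd G v) ≤ #(closedNbhd G a))
    (hsmall : #(closedNbhd G a ∪ {b}) ≤ #(closedNbhd G v)) :
    closedNbhd G a = closedNbhd G v := by
  have hsub : closedNbhd G v ⊆ closedNbhd G a ∪ {b} := by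
    rw [hN]
    intro x hx
    simp only [mem_insert, mem_singleton] at hx
    rcases hx with rfl | rfl | rfl
    · exact mem_union_left _ (mem_closedNbhd.mpr (Or.inr hva.symm))
    · exact mem_union_left _ (self_mem_closedNbhd x)
    · exact mem_union_right _ (mem_singleton_self x)
  have heq := eq_of_subset_of_card_le hsub hsmall
  exact eq_of_subset_of_card_le (heq ▸ subset_union_left) hmin

theorem card_maxIndepSets_le_of_closedNbhd_eq_triple (hR : 0 ≤ R)
    (hbranch : ∀ u W, (#(misBranch G u W) : ℝ) ≤ (√2)⁻¹ ^ #(closedNbhd G u ∪ W) * R)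
    (hmin : ∀ u, 3 ≤ #(closedNbhd G u)) {v a b : V} (hN : closedNbhd G v = {v, a, b})
    (ha : 4 ≤ #(closedNbhd G a ∪ {b})) : (#(maxIndepSets G) : ℝ) ≤ R := by
  have hcover : maxIndepSets G ⊆ misBranch G v ∅ ∪ misBranch G b ∅ ∪ misBranch G a {b} := by
    intro s hs
    obtain ⟨u, hu, hus⟩ := (mem_maxIndepSets.mp hs).exists_mem_closedNbhd v
    rw [hN, mem_insert, mem_insert, mem_singleton] at hu
    simp only [misBranch, mem_union, mem_filter, disjoint_empty_right, disjoint_singleton_right]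
    by_cases hbs : b ∈ s
    · tauto
    · rcases hu with rfl | rfl | rfl <;> tauto
  have hbound (u W) (k : ℕ) (hk : k ≤ #(closedNbhd G u ∪ W)) :
      (#(misBranch G u W) : ℝ) ≤ (√2)⁻¹ ^ k * R :=
    (hbranch u W).trans (mul_le_mul_of_nonneg_right (inv_sqrt_two_pow_antitone hk) hR)
  calc (#(maxIndepSets G) : ℝ)
      ≤ #(misBranch G v ∅) + #(misBranch G b ∅) + #(misBranch G a {b}) := by
        exact_mod_cast (card_le_card hcover).trans
          ((card_union_le _ _).trans (add_le_add (card_union_le _ _) le_rfl))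
    _ ≤ (√2)⁻¹ ^ 3 * R + (√2)⁻¹ ^ 3 * R + (√2)⁻¹ ^ 4 * R := by
        gcongr
        · exact hbound v ∅ 3 (by simpa using hmin v)
        · exact hbound b ∅ 3 (by simpa using hmin b)
        · exact hbound a {b} 4 ha
    _ = (2 * (√2)⁻¹ ^ 3 + (√2)⁻¹ ^ 4) * R := by ring
    _ ≤ R := mul_le_of_le_one_left hR two_mul_inv_sqrt_two_pow_three_add_pow_four_le_one

theorem card_maxIndepSets_le_of_branch_bound (hR : 0 ≤ R)
    (hbranch : ∀ u W, (#(misBranch G u W) : ℝ) ≤ (√2)⁻¹ ^ #(closedNbhd G u ∪ W) * R) {v : V}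
    (hmin : ∀ u, #(closedNbhd G v) ≤ #(closedNbhd G u))
    (hT : ¬ (#(closedNbhd G v) = 3 ∧ IsCliqueComponent G v)) :
    (#(maxIndepSets G) : ℝ) ≤ R := by
  by_cases h3 : #(closedNbhd G v) = 3
  · obtain ⟨a, b, -, hab⟩ := card_eq_two.mp
      (by rw [card_erase_of_mem (self_mem_closedNbhd v), h3] : #((closedNbhd G v).erase v) = 2)
    have hN : closedNbhd G v = {v, a, b} := by rw [← hab, insert_erase (self_mem_closedNbhd v)]
    have hadj {x} (hx : x ∈ (closedNbhd G v).erase v) : G.Adj v x :=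
      (mem_closedNbhd.mp (mem_of_mem_erase hx)).resolve_left (ne_of_mem_erase hx)
    have hmin3 : ∀ u, 3 ≤ #(closedNbhd G u) := h3 ▸ hmin
    by_cases ha : 4 ≤ #(closedNbhd G a ∪ {b})
    · exact card_maxIndepSets_le_of_closedNbhd_eq_triple hR hbranch hmin3 hN ha
    have hN' : closedNbhd G v = {v, b, a} := by rw [hN, pair_comm]
    by_cases hb : 4 ≤ #(closedNbhd G b ∪ {a})
    · exact card_maxIndepSets_le_of_closedNbhd_eq_triple hR hbranch hmin3 hN' hb
    refine absurd ⟨h3, fun x hx => ?_⟩ hT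
    rw [hN, mem_insert, mem_insert, mem_singleton] at hx
    rcases hx with rfl | rfl | rfl
    · rfl
    · exact closedNbhd_eq_of_card_union_singleton_le hN (hadj (by simp [hab])) (hmin x) (by omega)
    · exact closedNbhd_eq_of_card_union_singleton_le hN' (hadj (by simp [hab])) (hmin x) (by omega)
  · calc (#(maxIndepSets G) : ℝ) ≤ ∑ u ∈ closedNbhd G v, (#(misBranch G u ∅) : ℝ) := by
          exact_mod_cast (card_le_card (maxIndepSets_subset_biUnion_misBranch v)).trans
            card_biUnion_le
      _ ≤ ∑ _u ∈ closedNbhd G v, (√2)⁻¹ ^ #(closedNbhd G v) * R := by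
          refine sum_le_sum fun u _ => (hbranch u ∅).trans ?_
          rw [union_empty]
          exact mul_le_mul_of_nonneg_right (inv_sqrt_two_pow_antitone (hmin u)) hR
      _ = (#(closedNbhd G v) * (√2)⁻¹ ^ #(closedNbhd G v)) * R := by
          rw [sum_const, nsmul_eq_mul, mul_assoc]
      _ ≤ R := mul_le_of_le_one_left hR (natCast_mul_inv_sqrt_two_pow_le_one h3)

end Branching

section Induction

variable {G : SimpleGraph V} {t : ℕ}

theorem mis_le_misBound_of_triangle_component {v : V}
    (hG : ¬ HasInducedTriangleMatching G (t + 1))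
    (ih : ∀ s : Finset V, s.Nonempty → ∀ t', ¬ HasInducedTriangleMatching (G.induce ↑sᶜ) (t' + 1) →
      (mis (G.induce ↑sᶜ) : ℝ) ≤ misBound (Fintype.card V - #s) t')
    (h3 : #(closedNbhd G v) = 3) (hT : IsCliqueComponent G v) :
    (mis G : ℝ) ≤ misBound (Fintype.card V) t := by
  obtain _ | t := t
  · exact absurd (hasInducedTriangleMatching_zero.of_induce_compl_closedNbhd h3 hT) hG
  have hn : 3 ≤ Fintype.card V := h3 ▸ card_le_univ _
  calc (mis G : ℝ) ≤ 3 * mis (G.induce ↑(closedNbhd G v)ᶜ) := by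
        have h := card_maxIndepSets_le_of_closedNbhd_eq hT
        rw [h3, ← mis_eq_card_maxIndepSets] at h
        exact_mod_cast h
    _ ≤ 3 * misBound (Fintype.card V - 3) t := by
        gcongr
        exact h3 ▸ ih _ ⟨v, self_mem_closedNbhd v⟩ t
          fun h => hG (h.of_induce_compl_closedNbhd h3 hT)
    _ = misBound (Fintype.card V) (t + 1) := three_mul_misBound_sub_three t hn

theorem mis_le_misBound_of_induce_compl [Nonempty V]
    (hG : ¬ HasInducedTriangleMatching G (t + 1))
    (ih : ∀ s : Finset V, s.Nonempty → ∀ t', ¬ HasInducedTriangleMatching (G.induce ↑sᶜ) (t' + 1) →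
      (mis (G.induce ↑sᶜ) : ℝ) ≤ misBound (Fintype.card V - #s) t') :
    (mis G : ℝ) ≤ misBound (Fintype.card V) t := by
  obtain ⟨v, -, hmin⟩ := exists_min_image univ (fun u => #(closedNbhd G u)) univ_nonempty
  by_cases hT : #(closedNbhd G v) = 3 ∧ IsCliqueComponent G v
  · exact mis_le_misBound_of_triangle_component hG ih hT.1 hT.2
  rw [mis_eq_card_maxIndepSets]
  refine card_maxIndepSets_le_of_branch_bound (misBound_nonneg _ _) (fun u W => ?_)
    (fun u => hmin u (mem_univ u)) hT
  calc (#(misBranch G u W) : ℝ) ≤ mis (G.induce ↑(closedNbhd G u ∪ W)ᶜ) := by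
        exact_mod_cast card_misBranch_le u W
    _ ≤ misBound (Fintype.card V - #(closedNbhd G u ∪ W)) t :=
        ih _ ⟨u, mem_union_left _ (self_mem_closedNbhd u)⟩ t
          fun h => hG (h.map (SimpleGraph.Embedding.induce _))
    _ = _ := misBound_sub t (card_le_univ _)

theorem mis_le_misBound (G : SimpleGraph V) (hG : ¬ HasInducedTriangleMatching G (t + 1)) :
    (mis G : ℝ) ≤ misBound (Fintype.card V) t := by
  obtain ⟨n, hn⟩ : ∃ n, Fintype.card V = n := ⟨_, rfl⟩
  induction n using Nat.strong_induction_on generalizing V t with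
  | _ n ih =>
  subst hn
  rcases isEmpty_or_nonempty V with hV | hV
  · rw [mis_of_isEmpty, Fintype.card_eq_zero, Nat.cast_one]
    exact one_le_misBound_zero t
  refine mis_le_misBound_of_induce_compl hG fun s hs t' hs' => ?_
  have hcard : Fintype.card ↥(↑sᶜ : Set V) = Fintype.card V - #s := by
    simp only [coe_sort_coe, Fintype.card_coe, card_compl]
  exact hcard ▸ ih _ (hcard ▸ Nat.sub_lt Fintype.card_pos hs.card_pos) _ hs' hcard

end Induction

theorem kahn_park_triangle_stability :
    ∀ ε : ℝ, 0 < ε → ∃ δ : ℝ, 0 < δ ∧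
      ∀ n : ℕ, 0 < n → ∀ G : SimpleGraph (Fin n),
        (∀ k : ℕ, (1 - ε) * n / 3 ≤ (k : ℝ) → ¬ HasInducedTriangleMatching G k) →
        (mis G : ℝ) < 2 ^ ((Real.logb 2 3 / 3 - δ) * n) := by
  intro ε hε
  have hβ := sub_pos.mpr one_half_lt_logb_two_three_div_three
  refine ⟨(logb 2 3 / 3 - 1 / 2) * ε, mul_pos hβ hε, fun n _ G hG => ?_⟩
  obtain ⟨t, ht⟩ : ∃ t, ⌈(1 - ε) * n / 3⌉₊ = t + 1 :=
    Nat.exists_eq_succ_of_ne_zero fun h0 =>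
      hG 0 (h0 ▸ Nat.le_ceil _) hasInducedTriangleMatching_zero
  have htn : (t : ℝ) < (1 - ε) * n / 3 := Nat.lt_ceil.mp (by omega)
  have hmis := mis_le_misBound G (hG _ (ht ▸ Nat.le_ceil _))
  rw [Fintype.card_fin, misBound_eq_two_rpow] at hmis
  refine hmis.trans_lt (rpow_lt_rpow_of_exponent_lt one_lt_two ?_)
  nlinarith [mul_pos hβ (by linarith : (0 : ℝ) < (1 - ε) * n - 3 * t)]
end

section
/- For every ε > 0 there exists δ > 0 such that for every positive integer n, every triangle-free simple graph G on n vertices that contains no induced matching of size k for any integer k ≥ (1−ε)·n/2 satisfies mis(G) < 2^{(1/2 − δ)·n}. -/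
/-!
Branch on a vertex `v` of the current vertex set `W`. A maximal independent set of `G[W]` either
avoids `v`, and is then maximal in `W - v`, or contains some `x ∈ N[v]`, and then minus `x` it is
maximal in `W - N[x]`. Removing `N(u) ∪ N(v)` for an edge `uv` lowers the induced matching number.

By induction on `|W|`, if `W` has no induced matching of size `m + 1` then `G[W]` has at most
`2 ^ ((31 |W| + 2 m) / 64)` maximal independent sets: branch on a vertex of degree at least 3, of
degree 0 or of degree 1, or else `G[W]` is 2-regular, a union of cycles of length at least 4 since
`G` is triangle-free. In each case the drops `d_i` of `31 |W| + 2 m` along the branches satisfy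
`∑ 2 ^ (-d_i / 64) ≤ 1`. For the whole graph `2 m < (1 - ε) n`, which gives `δ = ε / 128`.
-/

open Finset

lemma two_rpow_le_two_rpow_mul {x y c : ℝ} {k : ℕ} (hc : 0 ≤ c) (h : 1 ≤ c ^ 64 * 2 ^ k)
    (hxy : x + k / 64 ≤ y) : (2 : ℝ) ^ x ≤ 2 ^ y * c := by
  have hk : (2 : ℝ) ^ (-(k / 64 : ℝ)) ≤ c := by
    have h64 : ((2 : ℝ) ^ (-(k / 64 : ℝ))) ^ 64 ≤ c ^ 64 := by
      rw [← Real.rpow_natCast, ← Real.rpow_mul zero_le_two,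
        show -(k / 64 : ℝ) * (64 : ℕ) = -k by push_cast; ring, Real.rpow_neg zero_le_two,
        Real.rpow_natCast, inv_le_iff_one_le_mul₀ (by positivity)]
      linarith
    exact (pow_le_pow_iff_left₀ (by positivity) hc (by norm_num)).1 h64
  calc (2 : ℝ) ^ x ≤ 2 ^ (y + -(k / 64 : ℝ)) :=
        Real.rpow_le_rpow_of_exponent_le one_le_two (by linarith)
    _ = 2 ^ y * 2 ^ (-(k / 64 : ℝ)) := Real.rpow_add two_pos _ _
    _ ≤ 2 ^ y * c := by gcongr

namespace SimpleGraph

open scoped Classical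

variable {V : Type*} (G : SimpleGraph V)

noncomputable def neighborsIn (W : Finset V) (v : V) : Finset V := {x ∈ W | G.Adj v x}

def IsMaxIndepIn (W s : Finset V) : Prop :=
  s ⊆ W ∧ IsIndepFinset G s ∧ ∀ x ∈ W, x ∉ s → ∃ y ∈ s, G.Adj x y

noncomputable def maxIndepSetsIn (W : Finset V) : Finset (Finset V) :=
  {s ∈ W.powerset | G.IsMaxIndepIn W s}

def IsInducedMatching (P : Finset (Finset V)) : Prop :=
  (∀ e ∈ P, ∃ u v, G.Adj u v ∧ e = {u, v}) ∧
    (P : Set (Finset V)).Pairwise fun e e' => ∀ a ∈ e, ∀ b ∈ e', a ≠ b ∧ ¬ G.Adj a b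

def HasInducedMatchingIn (W : Finset V) (t : ℕ) : Prop :=
  ∃ P : Finset (Finset V), #P = t ∧ (∀ e ∈ P, e ⊆ W) ∧ G.IsInducedMatching P

variable {G} {W W' s T : Finset V} {u v : V}

@[simp]
lemma mem_neighborsIn {x : V} : x ∈ G.neighborsIn W v ↔ x ∈ W ∧ G.Adj v x :=
  mem_filter

lemma neighborsIn_subset : G.neighborsIn W v ⊆ W := filter_subset _ _

lemma notMem_neighborsIn_self : v ∉ G.neighborsIn W v := by simp

lemma card_sdiff_insert_neighborsIn (hv : v ∈ W) :
    #(W \ insert v (G.neighborsIn W v)) + #(G.neighborsIn W v) + 1 = #W := by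
  rw [add_assoc, ← card_insert_of_notMem notMem_neighborsIn_self,
    card_sdiff_add_card_eq_card (insert_subset hv neighborsIn_subset)]

lemma sdiff_insert_neighborsIn_ssubset (hv : v ∈ W) : W \ insert v (G.neighborsIn W v) ⊂ W :=
  sdiff_ssubset (insert_subset hv neighborsIn_subset) (insert_nonempty _ _)

@[simp]
lemma mem_maxIndepSetsIn : s ∈ G.maxIndepSetsIn W ↔ G.IsMaxIndepIn W s := by
  simp only [maxIndepSetsIn, mem_filter, mem_powerset, and_iff_right_iff_imp]
  exact fun h => h.1

lemma maxIndepSetsIn_empty : G.maxIndepSetsIn ∅ = {∅} := by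
  ext s
  simp only [mem_maxIndepSetsIn, IsMaxIndepIn, subset_empty, mem_singleton]
  constructor
  · exact fun h => h.1
  · rintro rfl
    simp [IsIndepFinset]

lemma isMaxIndepIn_univ_iff [Fintype V] : G.IsMaxIndepIn univ s ↔ IsMaxIndepFinset G s := by
  refine ⟨fun ⟨_, hind, hdom⟩ => ⟨hind, fun t ht hst => ?_⟩, fun ⟨hind, hmax⟩ => ?_⟩
  · refine hst.antisymm fun x hxt => ?_
    by_contra hxs
    obtain ⟨y, hys, hxy⟩ := hdom x (mem_univ x) hxs
    exact ht hxt (hst hys) hxy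
  · refine ⟨subset_univ s, hind, fun x _ hxs => ?_⟩
    by_contra! hx
    have hind' : IsIndepFinset G (insert x s) := by
      intro a ha b hb
      rcases mem_insert.1 ha with rfl | ha' <;> rcases mem_insert.1 hb with rfl | hb'
      · exact G.irrefl
      · exact hx b hb'
      · exact fun h => hx a ha' h.symm
      · exact hind ha' hb'
    exact hxs (hmax _ hind' (subset_insert x s) ▸ mem_insert_self x s)

lemma mis_eq_card_maxIndepSetsIn_univ [Fintype V] : mis G = #(G.maxIndepSetsIn univ) := by
  rw [mis, ← Set.ncard_coe_finset]
  congr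
  ext s
  simp [isMaxIndepIn_univ_iff]

lemma IsMaxIndepIn.exists_mem_neighborsIn (hs : G.IsMaxIndepIn W s) (hv : v ∈ W) (hvs : v ∉ s) :
    ∃ u ∈ G.neighborsIn W v, u ∈ s := by
  obtain ⟨u, hus, hvu⟩ := hs.2.2 v hv hvs
  exact ⟨u, mem_neighborsIn.2 ⟨hs.1 hus, hvu⟩, hus⟩

lemma IsMaxIndepIn.erase_of_notMem (hs : G.IsMaxIndepIn W s) (hv : v ∉ s) :
    G.IsMaxIndepIn (W.erase v) s :=
  ⟨fun _ ha => mem_erase.2 ⟨ne_of_mem_of_not_mem ha hv, hs.1 ha⟩, hs.2.1,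
    fun x hx => hs.2.2 x (mem_of_mem_erase hx)⟩

lemma IsMaxIndepIn.erase (hs : G.IsMaxIndepIn W s) (hv : v ∈ s) (hT : Disjoint T s) :
    G.IsMaxIndepIn (W \ (insert v (G.neighborsIn W v) ∪ T)) (s.erase v) := by
  obtain ⟨hsW, hind, hdom⟩ := hs
  refine ⟨fun a ha => ?_, fun a ha b hb => hind (mem_of_mem_erase ha) (mem_of_mem_erase hb),
    fun x hx hxs => ?_⟩
  · obtain ⟨hav, has⟩ := mem_erase.1 ha
    simp only [mem_sdiff, mem_union, mem_insert, mem_neighborsIn, not_or]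
    exact ⟨hsW has, ⟨hav, fun h => hind hv has h.2⟩, disjoint_right.1 hT has⟩
  · simp only [mem_sdiff, mem_union, mem_insert, mem_neighborsIn, not_or] at hx
    obtain ⟨hxW, ⟨hxv, hvx⟩, -⟩ := hx
    obtain ⟨y, hys, hxy⟩ := hdom x hxW fun h => hxs (mem_erase.2 ⟨hxv, h⟩)
    refine ⟨y, mem_erase.2 ⟨?_, hys⟩, hxy⟩
    rintro rfl
    exact hvx ⟨hxW, hxy.symm⟩

lemma card_le_card_maxIndepSetsIn_sdiff_union {𝒜 : Finset (Finset V)}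
    (h𝒜 : ∀ s ∈ 𝒜, G.IsMaxIndepIn W s ∧ v ∈ s ∧ Disjoint T s) :
    #𝒜 ≤ #(G.maxIndepSetsIn (W \ (insert v (G.neighborsIn W v) ∪ T))) := by
  refine card_le_card_of_injOn (fun s => s.erase v) (fun s hs => ?_) (fun s hs t ht hst => ?_)
  · obtain ⟨hmax, hv, hT⟩ := h𝒜 s hs
    exact mem_maxIndepSetsIn.2 (hmax.erase hv hT)
  · rw [← insert_erase (h𝒜 s hs).2.1, ← insert_erase (h𝒜 t ht).2.1]
    exact congrArg (insert v) hst

lemma card_le_card_maxIndepSetsIn_sdiff {𝒜 : Finset (Finset V)}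
    (h𝒜 : ∀ s ∈ 𝒜, G.IsMaxIndepIn W s ∧ v ∈ s) :
    #𝒜 ≤ #(G.maxIndepSetsIn (W \ insert v (G.neighborsIn W v))) := by
  simpa using card_le_card_maxIndepSetsIn_sdiff_union (T := ∅) fun s hs =>
    ⟨(h𝒜 s hs).1, (h𝒜 s hs).2, disjoint_empty_left s⟩

lemma card_maxIndepSetsIn_le_erase_add (v : V) :
    #(G.maxIndepSetsIn W) ≤
      #(G.maxIndepSetsIn (W.erase v)) + #(G.maxIndepSetsIn (W \ insert v (G.neighborsIn W v))) := by
  rw [← card_filter_add_card_filter_not (v ∈ ·), add_comm]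
  refine add_le_add (card_le_card fun s hs => ?_) (card_le_card_maxIndepSetsIn_sdiff fun s hs => ?_)
  · rw [mem_filter, mem_maxIndepSetsIn] at hs
    exact mem_maxIndepSetsIn.2 (hs.1.erase_of_notMem hs.2)
  · simpa using hs

lemma hasInducedMatchingIn_zero : G.HasInducedMatchingIn W 0 :=
  ⟨∅, rfl, by simp, by simp [IsInducedMatching]⟩

lemma HasInducedMatchingIn.mono {t : ℕ} (h : G.HasInducedMatchingIn W' t) (hW : W' ⊆ W) :
    G.HasInducedMatchingIn W t :=
  let ⟨P, hP, hPW, hind⟩ := h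
  ⟨P, hP, fun e he => (hPW e he).trans hW, hind⟩

lemma HasInducedMatchingIn.succ_of_adj {t : ℕ} (h : G.HasInducedMatchingIn W' t)
    (huv : G.Adj u v) (hu : u ∈ W) (hv : v ∈ W)
    (hW' : W' ⊆ W \ (G.neighborsIn W u ∪ G.neighborsIn W v)) :
    G.HasInducedMatchingIn W (t + 1) := by
  obtain ⟨P, rfl, hPW, hedge, hsep⟩ := h
  have hfar : ∀ a ∈ ({u, v} : Finset V), ∀ b ∈ W', a ≠ b ∧ ¬ G.Adj a b := by
    intro a ha b hb
    have hb' := hW' hb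
    simp only [mem_sdiff, mem_union, mem_neighborsIn, not_or, not_and] at hb'
    obtain ⟨hbW, hub, hvb⟩ := hb'
    simp only [mem_insert, mem_singleton] at ha
    rcases ha with rfl | rfl
    · exact ⟨by rintro rfl; exact hvb hu huv.symm, hub hbW⟩
    · exact ⟨by rintro rfl; exact hub hv huv, hvb hbW⟩
  have hnew : {u, v} ∉ P := fun he =>
    (hfar u (mem_insert_self u _) u (hPW _ he (mem_insert_self u _))).1 rfl
  refine ⟨insert {u, v} P, card_insert_of_notMem hnew, ?_, ?_, ?_⟩
  · simp only [forall_mem_insert]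
    exact ⟨insert_subset hu (singleton_subset_iff.2 hv),
      fun e he => (hPW e he).trans (hW'.trans sdiff_subset)⟩
  · simp only [forall_mem_insert]
    exact ⟨⟨u, v, huv, rfl⟩, hedge⟩
  · rw [coe_insert, Set.pairwise_insert]
    refine ⟨hsep, fun e he _ =>
      ⟨fun a ha b hb => hfar a ha b (hPW e he hb), fun b hb a ha => ?_⟩⟩
    obtain ⟨hab, hadj⟩ := hfar a ha b (hPW e he hb)
    exact ⟨hab.symm, fun h => hadj h.symm⟩

lemma HasInducedMatchingIn.hasInducedMatching {t : ℕ} (h : G.HasInducedMatchingIn W t) :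
    HasInducedMatching G t := by
  obtain ⟨P, rfl, -, hedge, hsep⟩ := h
  let f : Fin #P → Finset V := fun i => P.equivFin.symm i
  have hf : ∀ i, f i ∈ P := fun i => (P.equivFin.symm i).2
  have hsep' : ∀ i j, i ≠ j → ∀ a ∈ f i, ∀ b ∈ f j, a ≠ b ∧ ¬ G.Adj a b :=
    fun i j hij => hsep (hf i) (hf j) fun h => hij (P.equivFin.symm.injective (Subtype.ext h))
  refine ⟨f, fun i => ?_,
    fun i j hij => Finset.disjoint_left.2 fun _ ha hb => (hsep' i j hij _ ha _ hb).1 rfl,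
    fun i => ?_, fun i j hij a ha b hb => (hsep' i j hij a ha b hb).2⟩
  · obtain ⟨u, v, huv, he⟩ := hedge _ (hf i)
    rw [he, card_pair huv.ne]
  · obtain ⟨u, v, huv, he⟩ := hedge _ (hf i)
    rw [he]
    intro a ha b hb hab
    simp only [mem_insert, mem_singleton] at ha hb
    rcases ha with rfl | rfl <;> rcases hb with rfl | rfl
    exacts [absurd rfl hab, huv, huv.symm, absurd rfl hab]

lemma card_maxIndepSetsIn_le_of_card_neighborsIn_eq_zero (hv : v ∈ W)
    (hdeg : #(G.neighborsIn W v) = 0) :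
    #(G.maxIndepSetsIn W) ≤ #(G.maxIndepSetsIn (W \ insert v (G.neighborsIn W v))) := by
  refine card_le_card_maxIndepSetsIn_sdiff fun s hs => ?_
  rw [mem_maxIndepSetsIn] at hs
  refine ⟨hs, by_contra fun hvs => ?_⟩
  obtain ⟨u, hu, -⟩ := hs.exists_mem_neighborsIn hv hvs
  simp [card_eq_zero.1 hdeg] at hu

lemma card_maxIndepSetsIn_le_of_neighborsIn_eq_singleton (hv : v ∈ W)
    (hN : G.neighborsIn W v = {u}) :
    #(G.maxIndepSetsIn W) ≤ #(G.maxIndepSetsIn (W \ insert v (G.neighborsIn W v))) +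
      #(G.maxIndepSetsIn (W \ insert u (G.neighborsIn W u))) := by
  rw [← card_filter_add_card_filter_not (u ∈ ·), add_comm]
  refine add_le_add (card_le_card_maxIndepSetsIn_sdiff fun s hs => ?_)
    (card_le_card_maxIndepSetsIn_sdiff fun s hs => by simpa using hs)
  rw [mem_filter, mem_maxIndepSetsIn] at hs
  refine ⟨hs.1, by_contra fun hvs => ?_⟩
  obtain ⟨w, hw, hws⟩ := hs.1.exists_mem_neighborsIn hv hvs
  rw [hN, mem_singleton] at hw
  exact hs.2 (hw ▸ hws)

lemma card_maxIndepSetsIn_le_of_neighborsIn_eq_pair {u₁ u₂ : V} (hv : v ∈ W)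
    (hN : G.neighborsIn W v = {u₁, u₂}) :
    #(G.maxIndepSetsIn W) ≤ #(G.maxIndepSetsIn (W \ insert v (G.neighborsIn W v))) +
      #(G.maxIndepSetsIn (W \ insert u₁ (G.neighborsIn W u₁))) +
      #(G.maxIndepSetsIn (W \ (insert u₂ (G.neighborsIn W u₂) ∪ {u₁}))) := by
  rw [← card_filter_add_card_filter_not (v ∈ ·), add_assoc,
    ← card_filter_add_card_filter_not (s := {s ∈ G.maxIndepSetsIn W | v ∉ s}) (u₁ ∈ ·)]
  refine add_le_add (card_le_card_maxIndepSetsIn_sdiff fun s hs => by simpa using hs)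
    (add_le_add (card_le_card_maxIndepSetsIn_sdiff fun s hs => by
        simp only [mem_filter, mem_maxIndepSetsIn] at hs
        exact ⟨hs.1.1, hs.2⟩)
      (card_le_card_maxIndepSetsIn_sdiff_union fun s hs => ?_))
  simp only [mem_filter, mem_maxIndepSetsIn] at hs
  obtain ⟨⟨hs, hvs⟩, hu₁s⟩ := hs
  obtain ⟨w, hw, hws⟩ := hs.exists_mem_neighborsIn hv hvs
  rw [hN, mem_insert, mem_singleton] at hw
  obtain rfl | rfl := hw
  · exact absurd hws hu₁s
  · exact ⟨hs, hws, disjoint_singleton_left.2 hu₁s⟩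

def MisBound (W : Finset V) : Prop :=
  ∀ m : ℕ, ¬ G.HasInducedMatchingIn W (m + 1) →
    (#(G.maxIndepSetsIn W) : ℝ) ≤ 2 ^ ((31 * #W + 2 * m : ℝ) / 64)

lemma MisBound.le_of_not_hasInducedMatchingIn {m : ℕ} (h : G.MisBound W)
    (hm : ¬ G.HasInducedMatchingIn W m) :
    (#(G.maxIndepSetsIn W) : ℝ) ≤ 2 ^ ((31 * #W + 2 * m - 2 : ℝ) / 64) := by
  obtain ⟨m, rfl⟩ := Nat.exists_eq_succ_of_ne_zero (n := m) <| by
    rintro rfl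
    exact hm hasInducedMatchingIn_zero
  convert h m hm using 3
  push_cast
  ring

lemma misBound_empty : G.MisBound ∅ := by
  intro m _
  rw [maxIndepSetsIn_empty, card_singleton, card_empty, Nat.cast_one]
  exact Real.one_le_rpow one_le_two (by positivity)

lemma misBound_of_card_neighborsIn_eq_zero (hv : v ∈ W) (hdeg : #(G.neighborsIn W v) = 0)
    (ih : G.MisBound (W \ insert v (G.neighborsIn W v))) : G.MisBound W := by
  intro m hm
  have hcard : (#(W \ insert v (G.neighborsIn W v)) : ℝ) + #(G.neighborsIn W v) + 1 = #W := by
    exact_mod_cast card_sdiff_insert_neighborsIn hv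
  rw [hdeg, Nat.cast_zero] at hcard
  calc (#(G.maxIndepSetsIn W) : ℝ)
      ≤ #(G.maxIndepSetsIn (W \ insert v (G.neighborsIn W v))) := by
        exact_mod_cast card_maxIndepSetsIn_le_of_card_neighborsIn_eq_zero hv hdeg
    _ ≤ _ := ih m fun h => hm (h.mono sdiff_subset)
    _ ≤ _ := Real.rpow_le_rpow_of_exponent_le one_le_two (by linarith)

lemma misBound_of_three_le_card_neighborsIn (hv : v ∈ W) (hdeg : 3 ≤ #(G.neighborsIn W v))
    (ih : ∀ W' ⊂ W, G.MisBound W') : G.MisBound W := by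
  intro m hm
  set E : ℝ := (31 * #W + 2 * m) / 64 with hE
  have hcard : (#(W \ insert v (G.neighborsIn W v)) : ℝ) + #(G.neighborsIn W v) + 1 = #W := by
    exact_mod_cast card_sdiff_insert_neighborsIn hv
  have hdeg' : (3 : ℝ) ≤ #(G.neighborsIn W v) := by exact_mod_cast hdeg
  have h₁ : (#(G.maxIndepSetsIn (W.erase v)) : ℝ) ≤ 2 ^ E * 0.715 :=
    (ih _ (erase_ssubset hv) m fun h => hm (h.mono (erase_subset v W))).trans <|
      two_rpow_le_two_rpow_mul (k := 31) (by norm_num) (by norm_num) <| by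
        rw [cast_card_erase_of_mem hv]; push_cast; linarith [hE]
  have h₂ : (#(G.maxIndepSetsIn (W \ insert v (G.neighborsIn W v))) : ℝ) ≤ 2 ^ E * 0.262 :=
    (ih _ (sdiff_insert_neighborsIn_ssubset hv) m fun h => hm (h.mono sdiff_subset)).trans <|
      two_rpow_le_two_rpow_mul (k := 124) (by norm_num) (by norm_num) (by push_cast; linarith [hE])
  have hsplit : (#(G.maxIndepSetsIn W) : ℝ) ≤ #(G.maxIndepSetsIn (W.erase v)) +
      #(G.maxIndepSetsIn (W \ insert v (G.neighborsIn W v))) := by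
    exact_mod_cast card_maxIndepSetsIn_le_erase_add v
  linarith [Real.rpow_pos_of_pos two_pos E]

lemma misBound_of_isolated_edge (hv : v ∈ W) (hNv : G.neighborsIn W v = {u})
    (hNu : G.neighborsIn W u = {v}) (ih : ∀ W' ⊂ W, G.MisBound W') : G.MisBound W := by
  intro m hm
  have hu : u ∈ W := neighborsIn_subset (hNv ▸ mem_singleton_self u)
  have huv : G.Adj u v := (mem_neighborsIn.1 (hNu ▸ mem_singleton_self v)).2
  have hsub : {u, v} ⊆ W := insert_subset hu (singleton_subset_iff.2 hv)
  have hcard : (#(W \ {u, v}) : ℝ) + 2 = #W := by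
    have := card_sdiff_add_card_eq_card hsub
    rw [card_pair huv.ne] at this
    exact_mod_cast this
  have hgain : ¬ G.HasInducedMatchingIn (W \ {u, v}) m := fun h =>
    hm (h.succ_of_adj huv hu hv (by rw [hNu, hNv, singleton_union, pair_comm]))
  have hhalf : (#(G.maxIndepSetsIn (W \ {u, v})) : ℝ) ≤
      2 ^ ((31 * #W + 2 * m : ℝ) / 64) * (1 / 2) :=
    ((ih _ (sdiff_ssubset hsub (insert_nonempty _ _))).le_of_not_hasInducedMatchingIn
      hgain).trans <|
      two_rpow_le_two_rpow_mul (k := 64) (by norm_num) (by norm_num) (by push_cast; linarith)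
  have hsplit := card_maxIndepSetsIn_le_of_neighborsIn_eq_singleton hv hNv
  rw [hNv, hNu, pair_comm v u] at hsplit
  have hsplit' : (#(G.maxIndepSetsIn W) : ℝ) ≤ #(G.maxIndepSetsIn (W \ {u, v})) +
      #(G.maxIndepSetsIn (W \ {u, v})) := by
    exact_mod_cast hsplit
  linarith

lemma misBound_of_pendant (hv : v ∈ W) (hNv : G.neighborsIn W v = {u})
    (hdeg : 2 ≤ #(G.neighborsIn W u)) (ih : ∀ W' ⊂ W, G.MisBound W') : G.MisBound W := by
  intro m hm
  set E : ℝ := (31 * #W + 2 * m) / 64 with hE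
  have hu : u ∈ W := neighborsIn_subset (hNv ▸ mem_singleton_self u)
  have hvu : G.Adj v u := (mem_neighborsIn.1 (hNv ▸ mem_singleton_self u)).2
  have hcard_v : (#(W \ insert v (G.neighborsIn W v)) : ℝ) + #(G.neighborsIn W v) + 1 = #W := by
    exact_mod_cast card_sdiff_insert_neighborsIn hv
  have hcard_u : (#(W \ insert u (G.neighborsIn W u)) : ℝ) + #(G.neighborsIn W u) + 1 = #W := by
    exact_mod_cast card_sdiff_insert_neighborsIn hu
  have hdeg_v : (#(G.neighborsIn W v) : ℝ) = 1 := by rw [hNv, card_singleton, Nat.cast_one]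
  have hdeg_u : (2 : ℝ) ≤ #(G.neighborsIn W u) := by exact_mod_cast hdeg
  have hgain : ¬ G.HasInducedMatchingIn (W \ insert u (G.neighborsIn W u)) m := fun h =>
    hm (h.succ_of_adj hvu hv hu (by rw [hNv, singleton_union]))
  have h₁ : (#(G.maxIndepSetsIn (W \ insert v (G.neighborsIn W v))) : ℝ) ≤ 2 ^ E * 0.511 :=
    (ih _ (sdiff_insert_neighborsIn_ssubset hv) m fun h => hm (h.mono sdiff_subset)).trans <|
      two_rpow_le_two_rpow_mul (k := 62) (by norm_num) (by norm_num) (by push_cast; linarith [hE])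
  have h₂ : (#(G.maxIndepSetsIn (W \ insert u (G.neighborsIn W u))) : ℝ) ≤ 2 ^ E * 0.358 :=
    ((ih _ (sdiff_insert_neighborsIn_ssubset hu)).le_of_not_hasInducedMatchingIn hgain).trans <|
      two_rpow_le_two_rpow_mul (k := 95) (by norm_num) (by norm_num) (by push_cast; linarith [hE])
  have hsplit : (#(G.maxIndepSetsIn W) : ℝ) ≤
      #(G.maxIndepSetsIn (W \ insert v (G.neighborsIn W v))) +
        #(G.maxIndepSetsIn (W \ insert u (G.neighborsIn W u))) := by
    exact_mod_cast card_maxIndepSetsIn_le_of_neighborsIn_eq_singleton hv hNv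
  linarith [Real.rpow_pos_of_pos two_pos E]

lemma misBound_of_forall_card_neighborsIn_eq_two (hG : G.CliqueFree 3)
    (hdeg : ∀ x ∈ W, #(G.neighborsIn W x) = 2) (hv : v ∈ W)
    (ih : ∀ W' ⊂ W, G.MisBound W') : G.MisBound W := by
  intro m hm
  set E : ℝ := (31 * #W + 2 * m) / 64 with hE
  obtain ⟨u₁, u₂, hne, hN⟩ := card_eq_two.1 (hdeg v hv)
  obtain ⟨hu₁, hvu₁⟩ := mem_neighborsIn.1 (hN ▸ mem_insert_self u₁ {u₂})
  obtain ⟨hu₂, hvu₂⟩ := mem_neighborsIn.1 (hN ▸ mem_insert_of_mem (mem_singleton_self _))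
  have hu₁₂ : ¬ G.Adj u₁ u₂ := fun h =>
    hG {v, u₁, u₂} (is3Clique_triple_iff.2 ⟨hvu₁, hvu₂, h⟩)
  have hcard : ∀ x ∈ W, (#(W \ insert x (G.neighborsIn W x)) : ℝ) + 3 = #W := fun x hx => by
    have := card_sdiff_insert_neighborsIn (G := G) hx
    rw [hdeg x hx] at this
    exact_mod_cast this
  have hbranch : ∀ x ∈ W,
      (#(G.maxIndepSetsIn (W \ insert x (G.neighborsIn W x))) : ℝ) ≤ 2 ^ E * 0.366 :=
    fun x hx =>
      (ih _ (sdiff_insert_neighborsIn_ssubset hx) m fun h => hm (h.mono sdiff_subset)).trans <|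
        two_rpow_le_two_rpow_mul (k := 93) (by norm_num) (by norm_num)
          (by push_cast; linarith [hE, hcard x hx])
  set X := insert u₂ (G.neighborsIn W u₂) ∪ {u₁}
  have hXW : X ⊆ W :=
    union_subset (insert_subset hu₂ neighborsIn_subset) (singleton_subset_iff.2 hu₁)
  have hcard₃ : (#(W \ X) : ℝ) + 4 = #W := by
    have hX : #X = 4 := by
      rw [card_union_of_disjoint, card_singleton, card_insert_of_notMem notMem_neighborsIn_self,
        hdeg u₂ hu₂]
      simp [hne, G.adj_comm u₂ u₁, hu₁₂]
    have := card_sdiff_add_card_eq_card hXW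
    rw [hX] at this
    exact_mod_cast this
  have hgain : ¬ G.HasInducedMatchingIn (W \ X) m := by
    refine fun h => hm (h.succ_of_adj hvu₂ hv hu₂ fun x hx => ?_)
    simp only [X, hN, mem_sdiff, mem_union, mem_insert, mem_singleton] at hx ⊢
    tauto
  have h₃ : (#(G.maxIndepSetsIn (W \ X)) : ℝ) ≤ 2 ^ E * 0.256 :=
    ((ih _ (sdiff_ssubset hXW (by simp [X]))).le_of_not_hasInducedMatchingIn hgain).trans <|
      two_rpow_le_two_rpow_mul (k := 126) (by norm_num) (by norm_num) (by push_cast; linarith [hE])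
  have hsplit : (#(G.maxIndepSetsIn W) : ℝ) ≤
      #(G.maxIndepSetsIn (W \ insert v (G.neighborsIn W v))) +
        #(G.maxIndepSetsIn (W \ insert u₁ (G.neighborsIn W u₁))) +
        #(G.maxIndepSetsIn (W \ X)) := by
    exact_mod_cast card_maxIndepSetsIn_le_of_neighborsIn_eq_pair hv hN
  linarith [Real.rpow_pos_of_pos two_pos E, hbranch v hv, hbranch u₁ hu₁]

lemma misBound_of_card_neighborsIn_eq_one (hv : v ∈ W) (hdeg : #(G.neighborsIn W v) = 1)
    (ih : ∀ W' ⊂ W, G.MisBound W') : G.MisBound W := by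
  obtain ⟨u, hNv⟩ := card_eq_one.1 hdeg
  obtain ⟨hu, hvu⟩ := mem_neighborsIn.1 (hNv ▸ mem_singleton_self u)
  have hvNu : v ∈ G.neighborsIn W u := mem_neighborsIn.2 ⟨hv, hvu.symm⟩
  obtain hdeg_u | hdeg_u := (Nat.one_le_iff_ne_zero.2 (card_ne_zero_of_mem hvNu)).eq_or_lt
  · refine misBound_of_isolated_edge hv hNv (eq_singleton_iff_unique_mem.2 ⟨hvNu, ?_⟩) ih
    exact fun x hx => card_le_one.1 hdeg_u.symm.le x hx v hvNu
  · exact misBound_of_pendant hv hNv hdeg_u ih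

theorem misBound (hG : G.CliqueFree 3) (W : Finset V) : G.MisBound W := by
  induction W using Finset.strongInduction with | H W ih => ?_
  obtain rfl | ⟨v₀, hv₀⟩ := W.eq_empty_or_nonempty
  · exact misBound_empty
  by_cases h₃ : ∃ v ∈ W, 3 ≤ #(G.neighborsIn W v)
  · obtain ⟨v, hv, hdeg⟩ := h₃
    exact misBound_of_three_le_card_neighborsIn hv hdeg ih
  by_cases h₀ : ∃ v ∈ W, #(G.neighborsIn W v) = 0
  · obtain ⟨v, hv, hdeg⟩ := h₀
    exact misBound_of_card_neighborsIn_eq_zero hv hdeg (ih _ (sdiff_insert_neighborsIn_ssubset hv))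
  by_cases h₁ : ∃ v ∈ W, #(G.neighborsIn W v) = 1
  · obtain ⟨v, hv, hdeg⟩ := h₁
    exact misBound_of_card_neighborsIn_eq_one hv hdeg ih
  push Not at h₃ h₀ h₁
  refine misBound_of_forall_card_neighborsIn_eq_two hG (fun x hx => ?_) hv₀ ih
  have := h₃ x hx
  have := h₀ x hx
  have := h₁ x hx
  omega

end SimpleGraph

theorem kahn_park_matching_stability :
    ∀ ε : ℝ, 0 < ε → ∃ δ : ℝ, 0 < δ ∧
      ∀ n : ℕ, 0 < n → ∀ G : SimpleGraph (Fin n), G.CliqueFree 3 →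
        (∀ k : ℕ, (1 - ε) * n / 2 ≤ (k : ℝ) → ¬ HasInducedMatching G k) →
        (mis G : ℝ) < 2 ^ ((1 / 2 - δ) * n) := by
  intro ε hε
  refine ⟨ε / 128, by positivity, fun n _ G hG hIM => ?_⟩
  have hIM₀ : HasInducedMatching G 0 :=
    (G.hasInducedMatchingIn_zero (W := ∅)).hasInducedMatching
  obtain ⟨m, hm⟩ : ∃ m, ⌈(1 - ε) * n / 2⌉₊ = m + 1 :=
    Nat.exists_eq_succ_of_ne_zero fun h => hIM _ (Nat.le_ceil _) (by rwa [h])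
  have hmx : (m : ℝ) < (1 - ε) * n / 2 := Nat.lt_ceil.1 (by omega)
  have hbound := G.misBound hG univ m fun h => hIM _ (hm ▸ Nat.le_ceil _) h.hasInducedMatching
  rw [card_univ, Fintype.card_fin] at hbound
  rw [G.mis_eq_card_maxIndepSetsIn_univ]
  refine hbound.trans_lt (Real.rpow_lt_rpow_of_exponent_lt one_lt_two ?_)
  nlinarith [mul_nonneg hε.le (Nat.cast_nonneg (α := ℝ) n)]
end

section
/- Let G be a finite simple graph and v a vertex of G. Then mis(G) ≤ Σ_{w ∈ N[v]} mis(G − N[w]), where N[u] = N(u) ∪ {u} denotes the closed neighborhood of u and G − N[w] denotes the induced subgraph of G on the vertices outside N[w]. -/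
/-! Every maximal independent set `s` of `G` meets `N[v]`, since otherwise `v` could be added
to it. If `w ∈ s`, then `s \ {w}` lies outside `N[w]` and is a maximal independent set of
`G − N[w]`; as `s` is recovered from it by adding `w` back, the maximal independent sets
containing `w` are at most `mis (G − N[w])` many. -/

open Finset

section

variable {V : Type*} {G : SimpleGraph V}

namespace IsIndepFinset

lemma insert_of_not_adj [DecidableEq V] {s : Finset V} {v : V} (hs : IsIndepFinset G s)
    (hv : ∀ x ∈ s, ¬ G.Adj v x) : IsIndepFinset G (insert v s) := by
  intro a ha b hb hab
  rw [mem_insert] at ha hb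
  rcases ha with rfl | ha <;> rcases hb with rfl | hb
  · exact G.irrefl hab
  · exact hv b hb hab
  · exact hv a ha hab.symm
  · exact hs ha hb hab

lemma of_induce {C : Set V} {t : Finset C} (ht : IsIndepFinset (G.induce C) t) :
    IsIndepFinset G (t.map (Function.Embedding.subtype _)) := by
  simp only [IsIndepFinset, mem_map, Function.Embedding.coe_subtype]
  rintro _ ⟨a, ha, rfl⟩ _ ⟨b, hb, rfl⟩
  exact ht ha hb

lemma induce {C : Set V} [DecidablePred (· ∈ C)] {s : Finset V} (hs : IsIndepFinset G s) :
    IsIndepFinset (G.induce C) (s.subtype (· ∈ C)) := fun _ ha _ hb =>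
  hs (mem_subtype.1 ha) (mem_subtype.1 hb)

lemma insert_map_subtype_compl_closedNbhd [DecidableEq V] {w : V}
    [DecidablePred (· ∈ (G.neighborSet w ∪ {w})ᶜ)] {s : Finset V} (hs : IsIndepFinset G s)
    (hw : w ∈ s) :
    insert w ((s.subtype (· ∈ (G.neighborSet w ∪ {w})ᶜ)).map (Function.Embedding.subtype _))
      = s := by
  ext x
  by_cases hxw : x = w
  · simp [hxw, hw]
  · simp only [subtype_map, mem_insert, hxw, false_or, mem_filter, and_iff_left_iff_imp]
    intro hx
    simp [hxw, hs hw hx]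

end IsIndepFinset

namespace IsMaxIndepFinset

lemma exists_mem_insert_neighborFinset [DecidableEq V] {s : Finset V}
    (hs : IsMaxIndepFinset G s) (v : V) [Fintype (G.neighborSet v)] :
    ∃ w ∈ insert v (G.neighborFinset v), w ∈ s := by
  by_contra! h
  have hv : ∀ x ∈ s, ¬ G.Adj v x := fun x hx hvx =>
    h x (mem_insert_of_mem ((G.mem_neighborFinset v x).2 hvx)) hx
  have hs_eq := hs.2 _ (hs.1.insert_of_not_adj hv) (subset_insert v s)
  exact h v (mem_insert_self v _) (hs_eq ▸ mem_insert_self v s)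

lemma induce_compl_closedNbhd [DecidableEq V] {w : V}
    [DecidablePred (· ∈ (G.neighborSet w ∪ {w})ᶜ)] {s : Finset V} (hs : IsMaxIndepFinset G s)
    (hw : w ∈ s) :
    IsMaxIndepFinset (G.induce (G.neighborSet w ∪ {w})ᶜ)
      (s.subtype (· ∈ (G.neighborSet w ∪ {w})ᶜ)) := by
  refine ⟨hs.1.induce, fun t ht hst => ?_⟩
  have ht_nonadj : ∀ x ∈ t.map (Function.Embedding.subtype _), ¬ G.Adj w x := by
    simp only [mem_map, Function.Embedding.coe_subtype]
    rintro _ ⟨⟨x, hx⟩, -, rfl⟩ hwx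
    exact hx (Or.inl hwx)
  have hs_sub : s ⊆ insert w (t.map (Function.Embedding.subtype _)) := by
    conv_lhs => rw [← hs.1.insert_map_subtype_compl_closedNbhd hw]
    exact insert_subset_insert _ (map_subset_map.2 hst)
  have hs_eq := hs.2 _ (ht.of_induce.insert_of_not_adj ht_nonadj) hs_sub
  refine hst.antisymm fun x hx => mem_subtype.2 ?_
  rw [hs_eq]
  exact mem_insert_of_mem (mem_map_of_mem _ hx)

end IsMaxIndepFinset

end

lemma ncard_setOf_isMaxIndepFinset_mem_le {V : Type*} [Finite V] [DecidableEq V]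
    (G : SimpleGraph V) (w : V) :
    {s | IsMaxIndepFinset G s ∧ w ∈ s}.ncard ≤
      mis (G.induce (G.neighborSet w ∪ {w})ᶜ) := by
  classical
  refine Set.ncard_le_ncard_of_injOn (fun s => s.subtype (· ∈ (G.neighborSet w ∪ {w})ᶜ))
    (fun s hs => hs.1.induce_compl_closedNbhd hs.2) fun s₁ h₁ s₂ h₂ h => ?_
  rw [← h₁.1.1.insert_map_subtype_compl_closedNbhd h₁.2,
    ← h₂.1.1.insert_map_subtype_compl_closedNbhd h₂.2]
  exact congrArg (fun t => insert w (t.map (Function.Embedding.subtype _))) h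

theorem mis_le_sum_closed_neighborhood {V : Type*} [Fintype V] [DecidableEq V]
    (G : SimpleGraph V) [DecidableRel G.Adj] (v : V) :
    mis G ≤ ∑ w ∈ insert v (G.neighborFinset v),
      mis (G.induce (G.neighborSet w ∪ {w})ᶜ) := by
  have hcover : {s | IsMaxIndepFinset G s} ⊆
      ⋃ w ∈ insert v (G.neighborFinset v), {s | IsMaxIndepFinset G s ∧ w ∈ s} := by
    intro s hs
    obtain ⟨w, hwN, hws⟩ := IsMaxIndepFinset.exists_mem_insert_neighborFinset hs v
    exact Set.mem_iUnion₂.2 ⟨w, hwN, hs, hws⟩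
  calc mis G
      ≤ (⋃ w ∈ insert v (G.neighborFinset v), {s | IsMaxIndepFinset G s ∧ w ∈ s}).ncard :=
        Set.ncard_le_ncard hcover
    _ ≤ ∑ w ∈ insert v (G.neighborFinset v), {s | IsMaxIndepFinset G s ∧ w ∈ s}.ncard :=
        set_ncard_biUnion_le _ _
    _ ≤ _ := sum_le_sum fun w _ => ncard_setOf_isMaxIndepFinset_mem_le G w
end

section
/- For every integer n ≥ 4, the number of maximal independent sets of the cycle C_n satisfies mis(C_n)^5 ≤ 5^n (equivalently, mis(C_n)^{1/n} ≤ 5^{1/5}). -/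
/-! A maximal independent set of `C_n` containing `0`, listed as `0 = x₀ < ⋯ < x_k` and closed
up by `n`, has consecutive differences `2` or `3`: independence rules out `1`, maximality rules
out `≥ 4`. Rotating a vertex among `0, 1, 2` to `0` (every maximal independent set contains one)
gives `mis C_n ≤ 3 p(n)`, where `p(n)` counts compositions of `n` into parts `2` and `3`, so that
`p(n) ≤ p(n - 2) + p(n - 3)`. Since `2 (a + b)⁵ ≤ 25 a⁵ + 125 b⁵` and
`25 ⋅ 5ⁿ⁻² + 125 ⋅ 5ⁿ⁻³ = 2 ⋅ 5ⁿ`, the bound `(3 p(n))⁵ ≤ 5ⁿ` propagates from `n = 4, 6, 7, 8`;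
the remaining case `n = 5`, where `3 p(5) = 6` is too large, is `mis C_5 = 5`. -/

open Finset

instance {V : Type*} [DecidableEq V] (G : SimpleGraph V) [DecidableRel G.Adj] (s : Finset V) :
    Decidable (IsIndepFinset G s) :=
  inferInstanceAs (Decidable (∀ ⦃a⦄, a ∈ s → ∀ ⦃b⦄, b ∈ s → ¬ G.Adj a b))

instance {V : Type*} [DecidableEq V] [Fintype V] (G : SimpleGraph V) [DecidableRel G.Adj]
    (s : Finset V) : Decidable (IsMaxIndepFinset G s) :=
  inferInstanceAs (Decidable (IsIndepFinset G s ∧ ∀ t, IsIndepFinset G t → s ⊆ t → s = t))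

theorem mis_eq_card_filter {V : Type*} [Fintype V] (G : SimpleGraph V)
    [DecidablePred (IsMaxIndepFinset G)] : mis G = #{s | IsMaxIndepFinset G s} := by
  rw [mis, ← Set.ncard_coe_finset, coe_filter]
  simp

section MaxIndep

variable {V W : Type*} {G : SimpleGraph V} {G' : SimpleGraph W} {s : Finset V}

theorem IsIndepFinset.map (φ : G ≃g G') (hs : IsIndepFinset G s) :
    IsIndepFinset G' (s.map φ.toEquiv.toEmbedding) := by
  simp only [IsIndepFinset, mem_map]
  rintro _ ⟨a, ha, rfl⟩ _ ⟨b, hb, rfl⟩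
  exact φ.map_adj_iff.not.mpr (hs ha hb)

theorem IsMaxIndepFinset.map (φ : G ≃g G') (hs : IsMaxIndepFinset G s) :
    IsMaxIndepFinset G' (s.map φ.toEquiv.toEmbedding) := by
  refine ⟨hs.1.map φ, fun t ht hst => ?_⟩
  have hsub : s ⊆ t.map φ.symm.toEquiv.toEmbedding := fun v hv =>
    mem_map.mpr ⟨φ v, hst (mem_map_of_mem _ hv), φ.symm_apply_apply v⟩
  rw [hs.2 _ (ht.map φ.symm) hsub, map_map]
  convert map_refl (s := t)
  ext w
  exact φ.apply_symm_apply w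

theorem IsMaxIndepFinset.exists_adj_of_notMem [DecidableEq V] (hs : IsMaxIndepFinset G s)
    {v : V} (hv : v ∉ s) : ∃ u ∈ s, G.Adj u v := by
  by_contra! h
  have hind : IsIndepFinset G (insert v s) := by
    intro a ha b hb hab
    rw [mem_insert] at ha hb
    rcases ha with rfl | ha <;> rcases hb with rfl | hb
    · exact G.loopless.irrefl _ hab
    · exact h b hb hab.symm
    · exact h a ha hab
    · exact hs.1 ha hb hab
  exact hv ((hs.2 _ hind (subset_insert v s)).symm ▸ mem_insert_self v s)

end MaxIndep

namespace SimpleGraph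

theorem cycleGraph_adj_iff_val {n : ℕ} (hn : 2 ≤ n) {u v : Fin n} :
    (cycleGraph n).Adj u v ↔
      (u : ℕ) = v + 1 ∨ (v : ℕ) = u + 1 ∨ (u : ℕ) + n = v + 1 ∨ (v : ℕ) + n = u + 1 := by
  have hsub : ∀ a b : Fin n, ((a - b : Fin n) : ℕ) = 1 ↔ (a : ℕ) = b + 1 ∨ (a : ℕ) + n = b + 1 := by
    intro a b
    rcases le_or_gt b a with hba | hab
    · rw [Fin.coe_sub_iff_le.mpr hba]; omega
    · rw [Fin.coe_sub_iff_lt.mpr hab]; omega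
  rw [cycleGraph_adj', hsub, hsub]
  omega

def cycleGraph.rotate {n : ℕ} [NeZero n] (r : Fin n) : cycleGraph n ≃g cycleGraph n where
  toEquiv := Equiv.subRight r
  map_rel_iff' := by simp [cycleGraph_adj']

end SimpleGraph

/-- `U` is the set of partial sums `0 = x₀ < x₁ < ⋯ < x_k = n` of a composition of `n` into
parts `2` and `3`. -/
structure IsTwoThreeChain (n : ℕ) (U : Finset ℕ) : Prop where
  zero_mem : 0 ∈ U
  last_mem : n ∈ U
  subset_range : U ⊆ range (n + 1)
  step : ∀ x ∈ U, x < n → x + 1 ∉ U ∧ (x + 2 ∈ U ∨ x + 3 ∈ U)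

def twoThreeChains : ℕ → Finset (Finset ℕ)
  | 0 => {{0}}
  | 1 => ∅
  | 2 => {{0, 2}}
  | n + 3 => (twoThreeChains (n + 1)).image (fun U => insert 0 (U.map (addLeftEmbedding 2))) ∪
      (twoThreeChains n).image (fun U => insert 0 (U.map (addLeftEmbedding 3)))

theorem card_twoThreeChains_add_three_le (n : ℕ) :
    #(twoThreeChains (n + 3)) ≤ #(twoThreeChains (n + 1)) + #(twoThreeChains n) :=
  (card_union_le _ _).trans (add_le_add card_image_le card_image_le)

theorem eq_insert_zero_map_preimage_add {U : Finset ℕ} {s : ℕ} (h0 : 0 ∈ U)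
    (hU : ∀ x ∈ U, x < s → x = 0) :
    U = insert 0 ((U.preimage (s + ·) (add_right_injective s).injOn).map (addLeftEmbedding s)) := by
  ext x
  simp only [mem_insert, mem_map, mem_preimage, addLeftEmbedding_apply]
  constructor
  · intro hx
    rcases lt_or_ge x s with hxs | hxs
    · exact Or.inl (hU x hx hxs)
    · exact Or.inr ⟨x - s, by rwa [Nat.add_sub_cancel' hxs], Nat.add_sub_cancel' hxs⟩
  · rintro (rfl | ⟨y, hy, rfl⟩)
    exacts [h0, hy]

theorem IsTwoThreeChain.preimage_add {n s : ℕ} {U : Finset ℕ} (hU : IsTwoThreeChain (n + s) U)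
    (hs : s ∈ U) : IsTwoThreeChain n (U.preimage (s + ·) (add_right_injective s).injOn) := by
  obtain ⟨-, hn, hsub, hstep⟩ := hU
  refine ⟨by simpa, by simpa [add_comm] using hn, fun x hx => ?_, fun x hx hxn => ?_⟩
  · have := mem_range.mp (hsub (mem_preimage.mp hx))
    exact mem_range.mpr (by omega)
  · simp only [mem_preimage] at hx ⊢
    simpa only [add_assoc] using hstep _ hx (by omega)

theorem IsTwoThreeChain.le {n : ℕ} {U : Finset ℕ} (hU : IsTwoThreeChain n U) {x : ℕ}
    (hx : x ∈ U) : x ≤ n :=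
  Nat.lt_succ_iff.mp (mem_range.mp (hU.subset_range hx))

theorem IsTwoThreeChain.mem_twoThreeChains {n : ℕ} {U : Finset ℕ} (hU : IsTwoThreeChain n U) :
    U ∈ twoThreeChains n := by
  induction n using twoThreeChains.induct generalizing U with
  | case1 =>
    rw [twoThreeChains, mem_singleton, eq_singleton_iff_unique_mem]
    exact ⟨hU.zero_mem, fun x hx => by have := hU.le hx; omega⟩
  | case2 => exact absurd hU.last_mem (hU.step 0 hU.zero_mem one_pos).1
  | case3 =>
    have h1 := (hU.step 0 hU.zero_mem two_pos).1
    rw [twoThreeChains, mem_singleton]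
    ext x
    simp only [mem_insert, mem_singleton]
    refine ⟨fun hx => ?_, by rintro (rfl | rfl) <;> [exact hU.zero_mem; exact hU.last_mem]⟩
    have := hU.le hx
    have : x ≠ 1 := by rintro rfl; exact h1 hx
    omega
  | case4 n ih2 ih3 =>
    obtain ⟨h1, h23⟩ := hU.step 0 hU.zero_mem (by omega)
    have hU1 : ∀ x ∈ U, x ≠ 1 := by rintro x hx rfl; exact h1 hx
    by_cases h2 : 2 ∈ U
    · have hV : IsTwoThreeChain (n + 1) _ := hU.preimage_add h2
      refine mem_union_left _ (mem_image.mpr ⟨_, ih2 hV, ?_⟩)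
      refine (eq_insert_zero_map_preimage_add hU.zero_mem fun x hx hx2 => ?_).symm
      have := hU1 x hx
      omega
    · have h3 := h23.resolve_left h2
      have hV : IsTwoThreeChain n _ := hU.preimage_add h3
      refine mem_union_right _ (mem_image.mpr ⟨_, ih3 hV, ?_⟩)
      refine (eq_insert_zero_map_preimage_add hU.zero_mem fun x hx hx3 => ?_).symm
      have := hU1 x hx
      have : x ≠ 2 := by rintro rfl; exact h2 hx
      omega

theorem isTwoThreeChain_of_isMaxIndepFinset_cycleGraph {n : ℕ} [NeZero n] (hn : 2 ≤ n)
    {S : Finset (Fin n)} (hS : IsMaxIndepFinset (SimpleGraph.cycleGraph n) S) (h0 : 0 ∈ S) :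
    IsTwoThreeChain n (insert n (S.map Fin.valEmbedding)) := by
  have hadj {u v : Fin n} := SimpleGraph.cycleGraph_adj_iff_val hn (u := u) (v := v)
  have hmem {x : ℕ} : x ∈ insert n (S.map Fin.valEmbedding) ↔ x = n ∨ ∃ u ∈ S, (u : ℕ) = x := by
    simp
  refine ⟨hmem.mpr (.inr ⟨0, h0, rfl⟩), hmem.mpr (.inl rfl), fun x hx => ?_, ?_⟩
  · obtain rfl | ⟨u, -, rfl⟩ := hmem.mp hx
    exacts [self_mem_range_succ _, mem_range.mpr (by omega)]
  rintro _ hx hxn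
  obtain ⟨v, hv, rfl⟩ := (hmem.mp hx).resolve_left hxn.ne
  have hv1 : (v : ℕ) + 1 < n := by
    by_contra
    exact hS.1 hv h0 (hadj.mpr (by simp; omega))
  refine ⟨fun h => ?_, ?_⟩
  · obtain ⟨w, hw, hvw⟩ := (hmem.mp h).resolve_left hv1.ne
    exact hS.1 hv hw (hadj.mpr (by omega))
  rcases lt_or_ge ((v : ℕ) + 2) n with hv2 | hv2
  · by_cases hw : (⟨v + 2, hv2⟩ : Fin n) ∈ S
    · exact .inl (hmem.mpr (.inr ⟨_, hw, rfl⟩))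
    obtain ⟨u, hu, huw⟩ := hS.exists_adj_of_notMem hw
    rcases hadj.mp huw with h | h | h | h
    · exact .inr (hmem.mpr (.inr ⟨u, hu, h⟩))
    · exact absurd (hadj.mpr (by simp at h; omega)) (hS.1 hv hu)
    · exact .inr (hmem.mpr (.inl (by simp at h; omega)))
    · simp at h; omega
  · exact .inl (hmem.mpr (.inl (by omega)))

theorem Fin.insert_map_valEmbedding_injective (n : ℕ) :
    Function.Injective fun S : Finset (Fin n) => insert n (S.map Fin.valEmbedding) := by
  intro S T h
  have hn {S : Finset (Fin n)} : n ∉ S.map Fin.valEmbedding := by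
    simpa using fun x _ => x.isLt.ne
  simpa [erase_insert hn] using congrArg (·.erase n) h

theorem card_filter_isMaxIndepFinset_cycleGraph_mem_le {n : ℕ} [NeZero n] (hn : 2 ≤ n)
    (v : Fin n) :
    #{S | IsMaxIndepFinset (SimpleGraph.cycleGraph n) S ∧ v ∈ S} ≤ #(twoThreeChains n) := by
  let φ := SimpleGraph.cycleGraph.rotate v
  refine card_le_card_of_injOn
    (fun S => insert n ((S.map φ.toEquiv.toEmbedding).map Fin.valEmbedding))
    (fun S hS => ?_) (fun S _ T _ h => ?_)
  · obtain ⟨-, hS, hv⟩ := mem_filter.mp (mem_coe.mp hS)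
    refine (isTwoThreeChain_of_isMaxIndepFinset_cycleGraph hn (hS.map φ) ?_).mem_twoThreeChains
    exact mem_map.mpr ⟨v, hv, sub_self v⟩
  · exact map_injective _ (Fin.insert_map_valEmbedding_injective n h)

theorem exists_val_lt_three_mem_of_isMaxIndepFinset_cycleGraph {n : ℕ} (hn : 3 ≤ n)
    {S : Finset (Fin n)} (hS : IsMaxIndepFinset (SimpleGraph.cycleGraph n) S) :
    ∃ u ∈ S, (u : ℕ) < 3 := by
  by_cases h1 : (⟨1, by omega⟩ : Fin n) ∈ S
  · exact ⟨_, h1, by simp⟩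
  obtain ⟨u, hu, hadj⟩ := hS.exists_adj_of_notMem h1
  refine ⟨u, hu, ?_⟩
  have := (SimpleGraph.cycleGraph_adj_iff_val (by omega)).mp hadj
  simp at this
  omega

theorem mis_cycleGraph_le {n : ℕ} (hn : 3 ≤ n) :
    mis (SimpleGraph.cycleGraph n) ≤ 3 * #(twoThreeChains n) := by
  have : NeZero n := ⟨by omega⟩
  rw [mis_eq_card_filter]
  calc #{S | IsMaxIndepFinset (SimpleGraph.cycleGraph n) S}
      ≤ #(univ.biUnion fun r : Fin 3 =>
          {S | IsMaxIndepFinset (SimpleGraph.cycleGraph n) S ∧ Fin.castLE hn r ∈ S}) := by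
        refine card_le_card fun S hS => ?_
        have hS := (mem_filter.mp hS).2
        obtain ⟨u, hu, hu3⟩ := exists_val_lt_three_mem_of_isMaxIndepFinset_cycleGraph hn hS
        exact mem_biUnion.mpr ⟨⟨u, hu3⟩, mem_univ _, mem_filter.mpr ⟨mem_univ _, hS, hu⟩⟩
    _ ≤ ∑ r : Fin 3, #(twoThreeChains n) :=
        card_biUnion_le.trans (sum_le_sum fun r _ =>
          card_filter_isMaxIndepFinset_cycleGraph_mem_le (by omega) _)
    _ = 3 * #(twoThreeChains n) := by simp

theorem two_mul_add_pow_five_le (a b : ℕ) : 2 * (a + b) ^ 5 ≤ 25 * a ^ 5 + 125 * b ^ 5 := by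
  have ha := Int.natCast_nonneg a
  have hb := Int.natCast_nonneg b
  zify
  nlinarith [mul_nonneg (pow_nonneg ha 3) (sq_nonneg ((a : ℤ) - b)),
    mul_nonneg (pow_nonneg hb 3) (sq_nonneg ((a : ℤ) - b)),
    mul_nonneg (mul_nonneg ha hb) (mul_nonneg ha (sq_nonneg ((a : ℤ) - b))),
    mul_nonneg (mul_nonneg ha hb) (mul_nonneg hb (sq_nonneg ((a : ℤ) - b))),
    pow_nonneg ha 5, pow_nonneg hb 5, mul_nonneg (pow_nonneg ha 4) hb,
    mul_nonneg (pow_nonneg hb 4) ha]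

theorem three_mul_pow_five_le_five_pow {p : ℕ → ℕ} (hrec : ∀ n, p (n + 3) ≤ p (n + 1) + p n)
    (h0 : p 0 ≤ 1) (h1 : p 1 = 0) (h2 : p 2 ≤ 1) {n : ℕ} (hn : 4 ≤ n) (hn5 : n ≠ 5) :
    (3 * p n) ^ 5 ≤ 5 ^ n := by
  have h3 : p 3 ≤ p 1 + p 0 := hrec 0
  have h4 : p 4 ≤ p 2 + p 1 := hrec 1
  have h5 : p 5 ≤ p 3 + p 2 := hrec 2
  have h6 : p 6 ≤ p 4 + p 3 := hrec 3
  have h7 : p 7 ≤ p 5 + p 4 := hrec 4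
  have h8 : p 8 ≤ p 6 + p 5 := hrec 5
  induction n using Nat.strong_induction_on with
  | _ n ih =>
    rcases (by omega : n = 4 ∨ n = 6 ∨ n = 7 ∨ n = 8 ∨ 9 ≤ n) with rfl | rfl | rfl | rfl | h9
    · exact (Nat.pow_le_pow_left (by omega : 3 * p 4 ≤ 3) 5).trans (by norm_num)
    · exact (Nat.pow_le_pow_left (by omega : 3 * p 6 ≤ 6) 5).trans (by norm_num)
    · exact (Nat.pow_le_pow_left (by omega : 3 * p 7 ≤ 9) 5).trans (by norm_num)
    · exact (Nat.pow_le_pow_left (by omega : 3 * p 8 ≤ 12) 5).trans (by norm_num)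
    · obtain ⟨m, rfl⟩ : ∃ m, n = m + 3 := ⟨n - 3, by omega⟩
      have ih1 := ih (m + 1) (by omega) (by omega) (by omega)
      have ih0 := ih m (by omega) (by omega) (by omega)
      have : 2 * (3 * p (m + 3)) ^ 5 ≤ 2 * 5 ^ (m + 3) := calc
        2 * (3 * p (m + 3)) ^ 5 ≤ 2 * (3 * p (m + 1) + 3 * p m) ^ 5 := by
          gcongr
          have := hrec m
          omega
        _ ≤ 25 * (3 * p (m + 1)) ^ 5 + 125 * (3 * p m) ^ 5 := two_mul_add_pow_five_le _ _
        _ ≤ 25 * 5 ^ (m + 1) + 125 * 5 ^ m := by gcongr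
        _ = 2 * 5 ^ (m + 3) := by ring
      omega

theorem mis_cycleGraph_five : mis (SimpleGraph.cycleGraph 5) = 5 := by
  rw [mis_eq_card_filter]
  decide

theorem mis_cycle_pow_le (n : ℕ) (hn : 4 ≤ n) :
    mis (SimpleGraph.cycleGraph n) ^ 5 ≤ 5 ^ n := by
  rcases eq_or_ne n 5 with rfl | hn5
  · rw [mis_cycleGraph_five]
  calc mis (SimpleGraph.cycleGraph n) ^ 5 ≤ (3 * #(twoThreeChains n)) ^ 5 :=
        Nat.pow_le_pow_left (mis_cycleGraph_le (by omega)) 5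
    _ ≤ 5 ^ n :=
        three_mul_pow_five_le_five_pow (p := fun k => #(twoThreeChains k))
          card_twoThreeChains_add_three_le (by decide) (by decide) (by decide) hn hn5
end

section
/- Every 2-regular simple graph G on n vertices (i.e., a disjoint union of cycles) that contains at most t vertex-disjoint triangles satisfies mis(G) ≤ 3^t · 5^{(n−3t)/5}. -/
/-!
Work inside a graph of maximum degree at most `2` and induct over vertex sets `U`, bounding the
number of maximal independent sets of `G[U]` by the potential `(3 / c³)ᵗ · ∏_{x ∈ U} (2 / c) rᵈ`,
where `c = 5^(1/5)`, `r = c / √2` and `d` is the degree of `x` inside `U`. A vertex of degree `2`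
contributes `c`, so for a 2-regular graph on `n` vertices the potential is `3ᵗ 5^((n - 3t)/5)`.

Every maximal independent set of `G[U]` contains one of a few small sets `P`, and those containing
`P` restrict injectively to maximal independent sets of `U ∖ N[P]`. Deleting `D ⊆ U` divides the
potential by `∏_{x ∈ D} (2 / c) r^(deg_U x + deg_{U∖D} x)`, a product of factors `≥ 1` which grow
with the number of neighbours a vertex has in `D`. The branchings used are: an isolated vertex;
an isolated edge; the end of a path; a triangle, which uses up one of the `t` triangles; and a
vertex `v` of a longer cycle with neighbours `a`, `b`, branching on `v`, on `a`, or on `b` together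
with the other neighbour `a₁` of `a`, at relative costs `2/5`, `2/5`, `1/5`. The constants make
isolated edges and 5-cycles tight.
-/

open Finset

namespace MisTwoRegular

noncomputable abbrev c : ℝ := 5 ^ (1 / 5 : ℝ)

noncomputable abbrev r : ℝ := c / √2

lemma c_pos : 0 < c := by positivity

lemma c_pow_five : c ^ 5 = 5 := by
  rw [c, ← Real.rpow_natCast, ← Real.rpow_mul (by norm_num)]
  norm_num

lemma c_mem_Icc : c ∈ Set.Icc (137 / 100) (138 / 100) := by
  rw [Set.mem_Icc]
  constructor <;> by_contra! h
  · have := pow_lt_pow_left₀ h c_pos.le (by norm_num : 5 ≠ 0)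
    rw [c_pow_five] at this
    norm_num at this
  · have := pow_lt_pow_left₀ h (by norm_num) (by norm_num : 5 ≠ 0)
    rw [c_pow_five] at this
    norm_num at this

lemma c_cube_le_three : c ^ 3 ≤ 3 :=
  (pow_le_pow_left₀ c_pos.le c_mem_Icc.2 3).trans (by norm_num)

lemma two_le_c_cube : 2 ≤ c ^ 3 :=
  (by norm_num : (2 : ℝ) ≤ (137 / 100) ^ 3).trans (pow_le_pow_left₀ (by norm_num) c_mem_Icc.1 3)

lemma r_pos : 0 < r := by positivity

lemma r_sq : r ^ 2 = c ^ 2 / 2 := by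
  rw [r, div_pow, Real.sq_sqrt zero_le_two]

lemma r_le_one : r ≤ 1 := by
  obtain ⟨h₁, h₂⟩ := c_mem_Icc
  nlinarith [r_sq, r_pos]

lemma two_div_c_mul_r : 2 / c * r = √2 := by
  rw [r]
  field_simp [c_pos.ne']
  exact (Real.sq_sqrt zero_le_two).symm

lemma two_div_c_mul_r_sq : 2 / c * r ^ 2 = c := by
  rw [r_sq]
  field_simp [c_pos.ne']

lemma two_div_c_mul_r_pow_three : 2 / c * r ^ 3 = c ^ 2 / √2 := by
  rw [pow_succ, r_sq, r]
  field_simp [c_pos.ne']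

lemma c_sq_div_sqrt_two_mul_self : c ^ 2 / √2 * (c ^ 2 / √2) = c ^ 4 / 2 := by
  rw [div_mul_div_comm, Real.mul_self_sqrt zero_le_two]
  ring

lemma sqrt_two_mul_c_sq_div_sqrt_two : √2 * (c ^ 2 / √2) = c ^ 2 :=
  mul_div_cancel₀ _ (by positivity)

lemma one_div_c_sq_add_two_fifths_le_one : 1 / c ^ 2 + 2 / 5 ≤ 1 := by
  have := c_mem_Icc.1
  have : 1 / c ^ 2 ≤ 3 / 5 := by rw [div_le_iff₀ (by positivity)]; nlinarith
  linarith

lemma c_pow_eq_rpow (m : ℕ) : c ^ m = (5 : ℝ) ^ ((m : ℝ) / 5) := by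
  rw [c, ← Real.rpow_natCast, ← Real.rpow_mul (by norm_num), one_div_mul_eq_div]

lemma one_le_three_div_c_cube : 1 ≤ 3 / c ^ 3 :=
  (one_le_div (by positivity)).2 c_cube_le_three

lemma three_div_c_cube_pow_mul_c_pow (t n : ℕ) :
    (3 / c ^ 3) ^ t * c ^ n = 3 ^ t * (5 : ℝ) ^ (((n : ℝ) - 3 * t) / 5) := by
  have h3t : (5 : ℝ) ^ ((3 * t : ℝ) / 5) = (c ^ 3) ^ t := by
    rw [← pow_mul, c_pow_eq_rpow]
    push_cast
    rfl
  rw [sub_div, Real.rpow_sub (by norm_num), ← c_pow_eq_rpow, h3t, div_pow]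
  ring

lemma one_le_two_div_c_mul_r_pow_four : 1 ≤ 2 / c * r ^ 4 := by
  rw [show r ^ 4 = (r ^ 2) ^ 2 by ring, r_sq]
  have := two_le_c_cube
  rw [div_mul_eq_mul_div, le_div_iff₀ c_pos]
  nlinarith [c_pos]

section MaximalIndependentSets

variable {V : Type*} (G : SimpleGraph V)

def IsMaxIndepIn (U s : Finset V) : Prop :=
  s ⊆ U ∧ IsIndepFinset G s ∧ ∀ x ∈ U, x ∉ s → ∃ y ∈ s, G.Adj x y

noncomputable def misOn (U : Finset V) : ℕ := {s : Finset V | IsMaxIndepIn G U s}.ncard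

lemma isMaxIndepFinset_iff_isMaxIndepIn_univ [Fintype V] (s : Finset V) :
    IsMaxIndepFinset G s ↔ IsMaxIndepIn G univ s := by
  classical
  refine ⟨fun ⟨hind, hmax⟩ => ⟨subset_univ s, hind, fun x _ hx => ?_⟩,
    fun ⟨_, hind, hdom⟩ => ⟨hind, fun t ht hst => ?_⟩⟩
  · by_contra! hx'
    have hins : IsIndepFinset G (insert x s) := by
      intro a ha b hb hab
      rw [mem_insert] at ha hb
      rcases ha with rfl | ha <;> rcases hb with rfl | hb
      · exact G.loopless.irrefl _ hab
      · exact hx' _ hb hab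
      · exact hx' _ ha hab.symm
      · exact hind ha hb hab
    exact hx (hmax _ hins (subset_insert x s) ▸ mem_insert_self x s)
  · refine hst.antisymm fun x hxt => by_contra fun hxs => ?_
    obtain ⟨y, hys, hxy⟩ := hdom x (mem_univ x) hxs
    exact ht hxt (hst hys) hxy

lemma mis_eq_misOn_univ [Fintype V] : mis G = misOn G univ := by
  simp only [mis, misOn, isMaxIndepFinset_iff_isMaxIndepIn_univ]

lemma misOn_empty : misOn G ∅ = 1 := by
  rw [misOn, ← Set.ncard_singleton (∅ : Finset V)]
  congr 1
  ext s
  simp only [IsMaxIndepIn, subset_empty, Set.mem_singleton_iff]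
  exact ⟨fun h => h.1, fun h => ⟨h, fun a ha => by simp [h] at ha, fun x hx => by simp at hx⟩⟩

end MaximalIndependentSets

section Triangles

variable {V : Type*} (G : SimpleGraph V)

def IsTrianglePacking (U : Finset V) (𝒯 : Finset (Finset V)) : Prop :=
  (∀ T ∈ 𝒯, T ⊆ U ∧ G.IsNClique 3 T) ∧ (𝒯 : Set (Finset V)).PairwiseDisjoint id

def TrianglePackingLE (U : Finset V) (t : ℕ) : Prop :=
  ∀ 𝒯, IsTrianglePacking G U 𝒯 → #𝒯 ≤ t

variable {G}

lemma TrianglePackingLE.mono {U U' : Finset V} {t : ℕ} (h : TrianglePackingLE G U t)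
    (hU : U' ⊆ U) : TrianglePackingLE G U' t :=
  fun 𝒯 ⟨h𝒯, hdisj⟩ => h 𝒯 ⟨fun T hT => ⟨(h𝒯 T hT).1.trans hU, (h𝒯 T hT).2⟩, hdisj⟩

lemma TrianglePackingLE.pos {U T : Finset V} {t : ℕ} (h : TrianglePackingLE G U t)
    (hTU : T ⊆ U) (hT : G.IsNClique 3 T) : 0 < t :=
  h {T} ⟨by simp [hTU, hT], by simp⟩

lemma TrianglePackingLE.sdiff [DecidableEq V] {U D T : Finset V} {t : ℕ}
    (h : TrianglePackingLE G U (t + 1)) (hTU : T ⊆ U) (hTD : T ⊆ D) (hT : G.IsNClique 3 T) :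
    TrianglePackingLE G (U \ D) t := by
  rintro 𝒯 ⟨h𝒯, hdisj⟩
  have hdisjT : ∀ T' ∈ 𝒯, Disjoint T T' := fun T' hT' =>
    (sdiff_disjoint.mono_left (h𝒯 T' hT').1).symm.mono_left hTD
  have hnotin : T ∉ 𝒯 := fun hmem => by
    simpa [hT.card_eq] using congrArg card (disjoint_self.1 (hdisjT T hmem))
  have := h (insert T 𝒯) ⟨fun T' hT' => (mem_insert.1 hT').elim (· ▸ ⟨hTU, hT⟩)
    fun hT' => ⟨(h𝒯 T' hT').1.trans sdiff_subset, (h𝒯 T' hT').2⟩,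
    by rw [coe_insert]; exact hdisj.insert fun T' hT' _ => hdisjT T' hT'⟩
  rw [card_insert_of_notMem hnotin] at this
  omega

lemma trianglePackingLE_univ [Fintype V] {t : ℕ} (h : ¬ ∃ f : Fin (t + 1) → Finset V,
      (∀ i, (f i).card = 3 ∧ ∀ a ∈ f i, ∀ b ∈ f i, a ≠ b → G.Adj a b) ∧
      (∀ i j, i ≠ j → Disjoint (f i) (f j))) :
    TrianglePackingLE G univ t := by
  rintro 𝒯 ⟨h𝒯, hdisj⟩
  by_contra! hlt
  obtain ⟨𝒮, h𝒮, hcard⟩ := exists_subset_card_eq (show t + 1 ≤ #𝒯 by omega)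
  let e := equivFinOfCardEq hcard
  refine h ⟨fun i => e.symm i, fun i => ?_, fun i j hij => ?_⟩
  · have hT := (h𝒯 _ (h𝒮 (e.symm i).2)).2
    exact ⟨hT.card_eq, fun a ha b hb hab => hT.isClique ha hb hab⟩
  · exact hdisj (h𝒮 (e.symm i).2) (h𝒮 (e.symm j).2)
      fun heq => hij (e.symm.injective (Subtype.ext heq))

end Triangles

variable {V : Type*} [Fintype V] [DecidableEq V] (G : SimpleGraph V) [DecidableRel G.Adj]

def closedNbhd (P : Finset V) : Finset V := P ∪ P.biUnion (G.neighborFinset ·)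

variable {G}

@[simp] lemma mem_closedNbhd {P : Finset V} {x : V} :
    x ∈ closedNbhd G P ↔ x ∈ P ∨ ∃ p ∈ P, G.Adj p x := by
  simp [closedNbhd]

lemma inter_closedNbhd_subset {s P : Finset V} (hs : IsIndepFinset G s) (hP : P ⊆ s) :
    s ∩ closedNbhd G P ⊆ P := by
  intro x hx
  obtain ⟨hxs, hx | ⟨p, hp, hpx⟩⟩ := mem_inter.1 hx |>.imp_right mem_closedNbhd.1
  · exact hx
  · exact absurd hpx (hs (hP hp) hxs)

lemma IsMaxIndepIn.sdiff_closedNbhd {U s P : Finset V} (hs : IsMaxIndepIn G U s) (hP : P ⊆ s) :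
    IsMaxIndepIn G (U \ closedNbhd G P) (s \ closedNbhd G P) := by
  obtain ⟨hsU, hind, hdom⟩ := hs
  refine ⟨sdiff_subset_sdiff hsU le_rfl, fun a ha b hb => hind (sdiff_subset ha) (sdiff_subset hb),
    fun x hx hxs => ?_⟩
  obtain ⟨hxU, hxN⟩ := mem_sdiff.1 hx
  obtain ⟨y, hys, hxy⟩ := hdom x hxU fun h => hxs (mem_sdiff.2 ⟨h, hxN⟩)
  refine ⟨y, mem_sdiff.2 ⟨hys, fun hyN => ?_⟩, hxy⟩
  exact hxN (mem_closedNbhd.2 (.inr ⟨y, inter_closedNbhd_subset hind hP (mem_inter.2 ⟨hys, hyN⟩),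
    hxy.symm⟩))

variable (G)

lemma ncard_isMaxIndepIn_superset_le (U P : Finset V) :
    {s | IsMaxIndepIn G U s ∧ P ⊆ s}.ncard ≤ misOn G (U \ closedNbhd G P) := by
  refine Set.ncard_le_ncard_of_injOn (· \ closedNbhd G P)
    (fun s ⟨hs, hP⟩ => hs.sdiff_closedNbhd hP) ?_ (Set.toFinite _)
  have hrecover : ∀ s, IsMaxIndepIn G U s ∧ P ⊆ s → s = s \ closedNbhd G P ∪ P := by
    rintro s ⟨hs, hP⟩
    have hinter : s ∩ closedNbhd G P = P :=
      (inter_closedNbhd_subset hs.2.1 hP).antisymm (subset_inter hP subset_union_left)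
    calc s = s \ closedNbhd G P ∪ s ∩ closedNbhd G P := (sdiff_union_inter s _).symm
      _ = _ := by rw [hinter]
  intro s hs s' hs' h
  rw [hrecover s hs, hrecover s' hs']
  exact congrArg (· ∪ P) h

lemma misOn_le_sum_of_cover (U : Finset V) {k : ℕ} (P : Fin k → Finset V)
    (hP : ∀ s, IsMaxIndepIn G U s → ∃ i, P i ⊆ s) :
    misOn G U ≤ ∑ i, misOn G (U \ closedNbhd G (P i)) := by
  calc misOn G U ≤ (⋃ i, {s | IsMaxIndepIn G U s ∧ P i ⊆ s}).ncard :=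
        Set.ncard_le_ncard (fun s hs => Set.mem_iUnion.2 <| (hP s hs).imp fun _ h => ⟨hs, h⟩)
          (Set.toFinite _)
    _ ≤ ∑ i, {s | IsMaxIndepIn G U s ∧ P i ⊆ s}.ncard := Set.ncard_iUnion_le_of_fintype _
    _ ≤ _ := sum_le_sum fun i _ => ncard_isMaxIndepIn_superset_le G U (P i)

lemma misOn_le_of_cover (U P : Finset V) (h : ∀ s, IsMaxIndepIn G U s → P ⊆ s) :
    misOn G U ≤ misOn G (U \ closedNbhd G P) := by
  simpa using misOn_le_sum_of_cover G U ![P] fun s hs => ⟨0, by simpa using h s hs⟩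

lemma misOn_le_add_of_cover (U P Q : Finset V) (h : ∀ s, IsMaxIndepIn G U s → P ⊆ s ∨ Q ⊆ s) :
    misOn G U ≤ misOn G (U \ closedNbhd G P) + misOn G (U \ closedNbhd G Q) := by
  simpa [Fin.sum_univ_two] using misOn_le_sum_of_cover G U ![P, Q] fun s hs =>
    (h s hs).elim (fun h => ⟨0, by simpa using h⟩) fun h => ⟨1, by simpa using h⟩

lemma misOn_le_add_add_of_cover (U P Q R : Finset V)
    (h : ∀ s, IsMaxIndepIn G U s → P ⊆ s ∨ Q ⊆ s ∨ R ⊆ s) :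
    misOn G U ≤ misOn G (U \ closedNbhd G P) + misOn G (U \ closedNbhd G Q) +
      misOn G (U \ closedNbhd G R) := by
  simpa [Fin.sum_univ_three] using misOn_le_sum_of_cover G U ![P, Q, R] fun s hs =>
    (h s hs).elim (fun h => ⟨0, by simpa using h⟩) fun h =>
      h.elim (fun h => ⟨1, by simpa using h⟩) fun h => ⟨2, by simpa using h⟩

def degIn (U : Finset V) (x : V) : ℕ := #(G.neighborFinset x ∩ U)

variable {G}

lemma degIn_le_degree (U : Finset V) (x : V) : degIn G U x ≤ G.degree x := by
  rw [degIn, ← G.card_neighborFinset_eq_degree]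
  exact card_le_card inter_subset_left

lemma sum_degIn_comm (A B : Finset V) : ∑ x ∈ A, degIn G B x = ∑ y ∈ B, degIn G A y := by
  convert sum_card_bipartiteAbove_eq_sum_card_bipartiteBelow (s := A) (t := B) (r := G.Adj)
    using 2 <;> rw [degIn] <;> congr 1 <;> ext <;> simp [G.adj_comm, and_comm]

lemma degIn_sdiff_add_degIn {U D : Finset V} (hD : D ⊆ U) (x : V) :
    degIn G (U \ D) x + degIn G D x = degIn G U x := by
  rw [degIn, degIn, degIn, ← card_union_of_disjoint
    (sdiff_disjoint.mono inter_subset_right inter_subset_right), ← inter_union_distrib_left,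
    sdiff_union_of_subset hD]

variable (G)

noncomputable def weight (U : Finset V) : ℝ := ∏ x ∈ U, 2 / c * r ^ degIn G U x

noncomputable abbrev deletionFactor (U D : Finset V) (x : V) : ℝ :=
  2 / c * r ^ (degIn G U x + degIn G (U \ D) x)

variable {G}

lemma weight_eq_mul_prod_deletionFactor {U D : Finset V} (hD : D ⊆ U) :
    weight G U = weight G (U \ D) * ∏ x ∈ D, deletionFactor G U D x := by
  have hout : ∏ x ∈ U \ D, 2 / c * r ^ degIn G U x =
      weight G (U \ D) * ∏ x ∈ D, r ^ degIn G (U \ D) x := by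
    rw [prod_pow_eq_pow_sum, ← sum_degIn_comm, ← prod_pow_eq_pow_sum, weight, ← prod_mul_distrib]
    refine prod_congr rfl fun x _ => ?_
    rw [← degIn_sdiff_add_degIn hD, pow_add, mul_assoc]
  rw [weight, ← prod_sdiff hD, hout, mul_assoc, ← prod_mul_distrib]
  congr 1
  refine prod_congr rfl fun x _ => ?_
  rw [deletionFactor, pow_add]
  ring

lemma one_le_deletionFactor (hdeg : ∀ v, G.degree v ≤ 2) (U D : Finset V) (x : V) :
    1 ≤ deletionFactor G U D x := by
  have h₁ := (degIn_le_degree (G := G) U x).trans (hdeg x)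
  have h₂ := (degIn_le_degree (G := G) (U \ D) x).trans (hdeg x)
  exact one_le_two_div_c_mul_r_pow_four.trans (mul_le_mul_of_nonneg_left
    (pow_le_pow_of_le_one r_pos.le r_le_one (by omega)) (div_nonneg zero_le_two c_pos.le))

lemma le_deletionFactor {U D T : Finset V} (hD : D ⊆ U) {x : V}
    (hT : T ⊆ G.neighborFinset x ∩ D) {k : ℕ} (hk : 2 * degIn G U x ≤ k + #T) :
    2 / c * r ^ k ≤ deletionFactor G U D x := by
  have h₁ : #T ≤ degIn G D x := card_le_card hT
  have h₂ := degIn_sdiff_add_degIn (G := G) hD x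
  exact mul_le_mul_of_nonneg_left (pow_le_pow_of_le_one r_pos.le r_le_one (by omega))
    (div_nonneg zero_le_two c_pos.le)

lemma c_le_deletionFactor (hdeg : ∀ v, G.degree v ≤ 2) {U D T : Finset V} (hD : D ⊆ U) {x : V}
    (hT : T ⊆ G.neighborFinset x ∩ D) (hT2 : #T = 2) : c ≤ deletionFactor G U D x := by
  have := (degIn_le_degree (G := G) U x).trans (hdeg x)
  exact two_div_c_mul_r_sq ▸ le_deletionFactor hD hT (by omega)

lemma c_sq_div_sqrt_two_le_deletionFactor (hdeg : ∀ v, G.degree v ≤ 2) {U D : Finset V}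
    (hD : D ⊆ U) {x a : V} (ha : G.Adj x a) (haD : a ∈ D) :
    c ^ 2 / √2 ≤ deletionFactor G U D x := by
  have := (degIn_le_degree (G := G) U x).trans (hdeg x)
  exact two_div_c_mul_r_pow_three ▸ le_deletionFactor hD (T := {a}) (by simp [*])
    (by rw [card_singleton]; omega)

lemma sqrt_two_le_deletionFactor {U D : Finset V} (hD : D ⊆ U) {x a : V}
    (hx : degIn G U x = 1) (ha : G.Adj x a) (haD : a ∈ D) :
    √2 ≤ deletionFactor G U D x := by
  have := le_deletionFactor (G := G) (x := x) hD (T := {a}) (k := 1) (by simp [*])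
    (by rw [card_singleton]; omega)
  rwa [pow_one, two_div_c_mul_r] at this

lemma prod_deletionFactor_le (hdeg : ∀ v, G.degree v ≤ 2) {U D S : Finset V} (hS : S ⊆ D) :
    ∏ x ∈ S, deletionFactor G U D x ≤ ∏ x ∈ D, deletionFactor G U D x :=
  prod_le_prod_of_subset_of_one_le hS
    (fun x _ => zero_le_one.trans (one_le_deletionFactor hdeg U D x))
    (fun x _ _ => one_le_deletionFactor hdeg U D x)

lemma weight_pos (U : Finset V) : 0 < weight G U :=
  prod_pos fun _ _ => mul_pos (div_pos two_pos c_pos) (pow_pos r_pos _)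

variable (G)

def WeightBound (U : Finset V) : Prop :=
  ∀ t, TrianglePackingLE G U t → (misOn G U : ℝ) ≤ (3 / c ^ 3) ^ t * weight G U

variable {G}

lemma misOn_sdiff_closedNbhd_le (hdeg : ∀ v, G.degree v ≤ 2) {U : Finset V}
    (ih : ∀ U' ⊂ U, WeightBound G U') {P : Finset V} {p : V} (hp : p ∈ P) (hpU : p ∈ U)
    {t : ℕ} (ht : TrianglePackingLE G (U \ closedNbhd G P) t) {S : Finset V}
    (hS : S ⊆ U ∩ closedNbhd G P) {m : ℝ} (hm : 0 < m)
    (hmS : m ≤ ∏ x ∈ S, deletionFactor G U (U ∩ closedNbhd G P) x) :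
    (misOn G (U \ closedNbhd G P) : ℝ) ≤ (3 / c ^ 3) ^ t * weight G U / m := by
  have hsub : U \ closedNbhd G P ⊂ U := sdiff_inter_self_left U (closedNbhd G P) ▸
    sdiff_ssubset inter_subset_left ⟨p, mem_inter.2 ⟨hpU, mem_closedNbhd.2 (.inl hp)⟩⟩
  have hW := weight_eq_mul_prod_deletionFactor (G := G) (inter_subset_left (s₁ := U)
    (s₂ := closedNbhd G P))
  rw [sdiff_inter_self_left] at hW
  rw [le_div_iff₀ hm, hW, ← mul_assoc]
  exact mul_le_mul (ih _ hsub t ht) (hmS.trans (prod_deletionFactor_le hdeg hS)) hm.le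
    (by have := weight_pos (G := G) (U \ closedNbhd G P); positivity)

lemma IsMaxIndepIn.exists_mem_neighborFinset_inter {U s : Finset V} (hs : IsMaxIndepIn G U s)
    {x : V} (hx : x ∈ U) (hxs : x ∉ s) : ∃ y ∈ G.neighborFinset x ∩ U, y ∈ s := by
  obtain ⟨y, hys, hxy⟩ := hs.2.2 x hx hxs
  exact ⟨y, mem_inter.2 ⟨(G.mem_neighborFinset _ _).2 hxy, hs.1 hys⟩, hys⟩

lemma IsMaxIndepIn.mem_or_mem_of_eq_singleton {U s : Finset V} (hs : IsMaxIndepIn G U s)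
    {x y : V} (hx : x ∈ U) (hN : G.neighborFinset x ∩ U = {y}) : x ∈ s ∨ y ∈ s := by
  refine or_iff_not_imp_left.2 fun hxs => ?_
  obtain ⟨z, hz, hzs⟩ := hs.exists_mem_neighborFinset_inter hx hxs
  rw [hN, mem_singleton] at hz
  rwa [hz] at hzs

lemma IsMaxIndepIn.mem_or_mem_or_mem_of_eq_pair {U s : Finset V} (hs : IsMaxIndepIn G U s)
    {x y z : V} (hx : x ∈ U) (hN : G.neighborFinset x ∩ U = {y, z}) : x ∈ s ∨ y ∈ s ∨ z ∈ s := by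
  refine or_iff_not_imp_left.2 fun hxs => ?_
  obtain ⟨w, hw, hws⟩ := hs.exists_mem_neighborFinset_inter hx hxs
  rw [hN, mem_insert, mem_singleton] at hw
  rcases hw with rfl | rfl
  exacts [.inl hws, .inr hws]

lemma neighborFinset_inter_eq_singleton {U : Finset V} {x y : V} (h : degIn G U x = 1)
    (hy : G.Adj x y) (hyU : y ∈ U) : G.neighborFinset x ∩ U = {y} := by
  obtain ⟨z, hz⟩ := card_eq_one.1 h
  have : y ∈ ({z} : Finset V) := hz ▸ mem_inter.2 ⟨(G.mem_neighborFinset _ _).2 hy, hyU⟩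
  rw [hz, mem_singleton.1 this]

lemma exists_neighborFinset_inter_eq_pair {U : Finset V} {x y : V} (h : degIn G U x = 2)
    (hy : G.Adj x y) (hyU : y ∈ U) : ∃ z, z ≠ y ∧ G.neighborFinset x ∩ U = {y, z} := by
  obtain ⟨p, q, hpq, he⟩ := card_eq_two.1 h
  have : y ∈ ({p, q} : Finset V) := he ▸ mem_inter.2 ⟨(G.mem_neighborFinset _ _).2 hy, hyU⟩
  rw [mem_insert, mem_singleton] at this
  rcases this with rfl | rfl
  exacts [⟨q, hpq.symm, he⟩, ⟨p, hpq, he.trans (pair_comm _ _)⟩]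

lemma misOn_sdiff_closedNbhd_le_of_pair (hdeg : ∀ v, G.degree v ≤ 2) {U : Finset V}
    (ih : ∀ U' ⊂ U, WeightBound G U') {x p q : V} (hx : x ∈ U)
    (hN : G.neighborFinset x ∩ U = {p, q}) (hpq : p ≠ q) {t : ℕ}
    (ht : TrianglePackingLE G (U \ closedNbhd G {x}) t) :
    (misOn G (U \ closedNbhd G {x}) : ℝ) ≤ (3 / c ^ 3) ^ t * weight G U * (2 / 5) := by
  have hp : G.Adj x p ∧ p ∈ U := by simpa using hN.ge (mem_insert_self p {q})
  have hq : G.Adj x q ∧ q ∈ U := by simpa using hN.ge (mem_insert_of_mem (mem_singleton_self q))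
  have hD := inter_subset_left (s₁ := U) (s₂ := closedNbhd G {x})
  have hbound := misOn_sdiff_closedNbhd_le hdeg ih (mem_singleton_self x) hx ht
    (S := {x, p, q}) (by simp [insert_subset_iff, hx, hp, hq])
    (m := c * (c ^ 2 / √2 * (c ^ 2 / √2))) (by positivity) (by
      rw [prod_insert (by simp [hp.1.ne, hq.1.ne]), prod_insert (by simpa using hpq),
        prod_singleton]
      gcongr
      · exact c_le_deletionFactor hdeg hD (x := x) (T := {p, q})
          (by simp [insert_subset_iff, hp, hq])
          (card_pair hpq)
      · exact c_sq_div_sqrt_two_le_deletionFactor hdeg hD hp.1.symm (by simp [hx])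
      · exact c_sq_div_sqrt_two_le_deletionFactor hdeg hD hq.1.symm (by simp [hx]))
  rw [c_sq_div_sqrt_two_mul_self, show c * (c ^ 4 / 2) = 5 / 2 by rw [← c_pow_five]; ring]
    at hbound
  linarith

lemma misOn_sdiff_closedNbhd_le_of_leaf (hdeg : ∀ v, G.degree v ≤ 2) {U : Finset V}
    (ih : ∀ U' ⊂ U, WeightBound G U') {x y : V} (hx : x ∈ U)
    (hN : G.neighborFinset x ∩ U = {y}) {t : ℕ}
    (ht : TrianglePackingLE G (U \ closedNbhd G {x}) t) :
    (misOn G (U \ closedNbhd G {x}) : ℝ) ≤ (3 / c ^ 3) ^ t * weight G U / c ^ 2 := by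
  have hy : G.Adj x y ∧ y ∈ U := by simpa using hN.ge (mem_singleton_self y)
  have hD := inter_subset_left (s₁ := U) (s₂ := closedNbhd G {x})
  refine sqrt_two_mul_c_sq_div_sqrt_two ▸ misOn_sdiff_closedNbhd_le hdeg ih (mem_singleton_self x)
    hx ht (S := {x, y}) (by simp [insert_subset_iff, hx, hy]) (by positivity) ?_
  rw [prod_pair hy.1.ne]
  gcongr
  · exact sqrt_two_le_deletionFactor hD (by rw [degIn, hN, card_singleton]) hy.1 (by simp [hy])
  · exact c_sq_div_sqrt_two_le_deletionFactor hdeg hD hy.1.symm (by simp [hx])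

lemma misOn_sdiff_closedNbhd_le_of_edge {U : Finset V} (hdeg : ∀ v, G.degree v ≤ 2)
    (ih : ∀ U' ⊂ U, WeightBound G U') {x y : V} (hx : x ∈ U)
    (hxy : G.neighborFinset x ∩ U = {y}) (hyx : G.neighborFinset y ∩ U = {x}) {t : ℕ}
    (ht : TrianglePackingLE G (U \ closedNbhd G {x}) t) :
    (misOn G (U \ closedNbhd G {x}) : ℝ) ≤ (3 / c ^ 3) ^ t * weight G U / 2 := by
  have hy : G.Adj x y ∧ y ∈ U := by simpa using hxy.ge (mem_singleton_self y)
  have hD := inter_subset_left (s₁ := U) (s₂ := closedNbhd G {x})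
  refine Real.mul_self_sqrt zero_le_two ▸ misOn_sdiff_closedNbhd_le hdeg ih (mem_singleton_self x)
    hx ht (S := {x, y}) (by simp [insert_subset_iff, hx, hy]) (by positivity) ?_
  rw [prod_pair hy.1.ne]
  gcongr
  · exact sqrt_two_le_deletionFactor hD (by rw [degIn, hxy, card_singleton]) hy.1 (by simp [hy])
  · exact sqrt_two_le_deletionFactor hD (by rw [degIn, hyx, card_singleton]) hy.1.symm
      (by simp [hx])

lemma weightBound_of_degIn_eq_zero (hdeg : ∀ v, G.degree v ≤ 2) {U : Finset V}
    (ih : ∀ U' ⊂ U, WeightBound G U') {x : V} (hx : x ∈ U) (h0 : degIn G U x = 0) :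
    WeightBound G U := by
  intro t ht
  have hcover : ∀ s, IsMaxIndepIn G U s → {x} ⊆ s := fun s hs => by
    by_contra hxs
    obtain ⟨y, hy, -⟩ := hs.exists_mem_neighborFinset_inter hx (by simpa using hxs)
    exact (card_pos.2 ⟨y, hy⟩).ne' h0
  have hbranch := misOn_sdiff_closedNbhd_le hdeg ih (mem_singleton_self x) hx
    (ht.mono sdiff_subset) (S := ∅) (empty_subset _) one_pos (by simp)
  calc (misOn G U : ℝ) ≤ misOn G (U \ closedNbhd G {x}) := by
        exact_mod_cast misOn_le_of_cover G U {x} hcover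
    _ ≤ _ := by simpa using hbranch

lemma weightBound_of_degIn_eq_one (hdeg : ∀ v, G.degree v ≤ 2) {U : Finset V}
    (ih : ∀ U' ⊂ U, WeightBound G U') {x y : V} (hx : x ∈ U)
    (hN : G.neighborFinset x ∩ U = {y}) : WeightBound G U := by
  intro t ht
  have hy : G.Adj x y ∧ y ∈ U := by simpa using hN.ge (mem_singleton_self y)
  have hcover := misOn_le_add_of_cover G U {x} {y} fun s hs => by
    simpa using hs.mem_or_mem_of_eq_singleton hx hN
  have hleaf := misOn_sdiff_closedNbhd_le_of_leaf hdeg ih hx hN (ht.mono sdiff_subset)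
  have hy12 : degIn G U y = 1 ∨ degIn G U y = 2 := by
    have := (degIn_le_degree (G := G) U y).trans (hdeg y)
    have : 0 < degIn G U y := card_pos.2 ⟨x, by simp [hx, hy.1.symm]⟩
    omega
  rcases hy12 with hy1 | hy2
  · have hNy := neighborFinset_inter_eq_singleton hy1 hy.1.symm hx
    have hedge := misOn_sdiff_closedNbhd_le_of_edge hdeg ih hy.2 hNy hN (ht.mono sdiff_subset)
    calc (misOn G U : ℝ) ≤ _ := by exact_mod_cast hcover
      _ ≤ _ := add_le_add (misOn_sdiff_closedNbhd_le_of_edge hdeg ih hx hN hNy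
          (ht.mono sdiff_subset)) hedge
      _ = _ := by ring
  · obtain ⟨z, hzx, hNy⟩ := exists_neighborFinset_inter_eq_pair hy2 hy.1.symm hx
    have hstar := misOn_sdiff_closedNbhd_le_of_pair hdeg ih hy.2 hNy hzx.symm
      (ht.mono sdiff_subset)
    calc (misOn G U : ℝ) ≤ _ := by exact_mod_cast hcover
      _ ≤ _ := add_le_add hleaf hstar
      _ = (3 / c ^ 3) ^ t * weight G U * (1 / c ^ 2 + 2 / 5) := by ring
      _ ≤ (3 / c ^ 3) ^ t * weight G U * 1 := by
        have := weight_pos (G := G) U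
        gcongr
        exact one_div_c_sq_add_two_fifths_le_one
      _ = _ := mul_one _

lemma weightBound_of_triangle (hdeg : ∀ v, G.degree v ≤ 2) {U : Finset V}
    (ih : ∀ U' ⊂ U, WeightBound G U') {x y z : V} (hx : x ∈ U)
    (hN : G.neighborFinset x ∩ U = {y, z}) (hyz : G.Adj y z) : WeightBound G U := by
  intro t ht
  have hy : G.Adj x y ∧ y ∈ U := by simpa using hN.ge (mem_insert_self y {z})
  have hz : G.Adj x z ∧ z ∈ U := by simpa using hN.ge (mem_insert_of_mem (mem_singleton_self z))
  set T : Finset V := {x, y, z}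
  have hT : G.IsNClique 3 T := SimpleGraph.is3Clique_triple_iff.2 ⟨hy.1, hz.1, hyz⟩
  have hTU : T ⊆ U := by simp [T, insert_subset_iff, hx, hy.2, hz.2]
  obtain ⟨t, rfl⟩ := Nat.exists_eq_add_one.2 (ht.pos hTU hT)
  have hbranch : ∀ w ∈ T,
      (misOn G (U \ closedNbhd G {w}) : ℝ) ≤ (3 / c ^ 3) ^ t * weight G U / c ^ 3 := by
    intro w hw
    have hTD : T ⊆ U ∩ closedNbhd G {w} := fun v hv => by
      by_cases hwv : w = v
      · simp [hwv, hTU hv]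
      · simp [hTU hv, hT.isClique hw hv hwv]
    refine misOn_sdiff_closedNbhd_le hdeg ih (mem_singleton_self w) (hTU hw)
      (ht.sdiff hTU (hTD.trans inter_subset_right) hT) hTD (by positivity) ?_
    calc c ^ 3 = ∏ _v ∈ T, c := by rw [prod_const, hT.card_eq]
      _ ≤ _ := prod_le_prod (fun _ _ => c_pos.le) fun v hv =>
        c_le_deletionFactor hdeg inter_subset_left (T := T.erase v)
          (fun u hu => mem_inter.2 ⟨(G.mem_neighborFinset _ _).2
            (hT.isClique hv (mem_of_mem_erase hu) (ne_of_mem_erase hu).symm),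
            hTD (mem_of_mem_erase hu)⟩)
          (by rw [card_erase_of_mem hv, hT.card_eq])
  have hcover := misOn_le_add_add_of_cover G U {x} {y} {z} fun s hs => by
    simpa using hs.mem_or_mem_or_mem_of_eq_pair hx hN
  calc (misOn G U : ℝ) ≤ _ := by exact_mod_cast hcover
    _ ≤ _ := add_le_add (add_le_add (hbranch x (by simp [T])) (hbranch y (by simp [T])))
        (hbranch z (by simp [T]))
    _ = (3 / c ^ 3) ^ (t + 1) * weight G U := by
        rw [pow_succ]
        ring

lemma c_pow_five_le_prod_deletionFactor_of_path (hdeg : ∀ v, G.degree v ≤ 2) {U D : Finset V}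
    (hD : D ⊆ U) {v a b a₁ b₁ x₁ : V} (hva : G.Adj v a) (hvb : G.Adj v b) (haa₁ : G.Adj a a₁)
    (hbb₁ : G.Adj b b₁) (ha₁x₁ : G.Adj a₁ x₁) (hS : {v, a, b, a₁} ∪ {b₁, x₁} ⊆ D)
    (hvS : v ∉ ({a, b, a₁} : Finset V)) (haS : a ∉ ({b, a₁} : Finset V)) (hba₁ : b ≠ a₁)
    (hdisj : Disjoint ({v, a, b, a₁} : Finset V) {b₁, x₁}) :
    c ^ 5 ≤ ∏ w ∈ {v, a, b, a₁} ∪ {b₁, x₁}, deletionFactor G U D w := by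
  obtain ⟨hb₁D, hvD, haD, hbD, ha₁D, hx₁D⟩ :
      b₁ ∈ D ∧ v ∈ D ∧ a ∈ D ∧ b ∈ D ∧ a₁ ∈ D ∧ x₁ ∈ D := by
    simpa [insert_subset_iff] using hS
  have hab : a ≠ b := fun h => haS (by simp [h])
  have hva₁ : v ≠ a₁ := fun h => hvS (by simp [h])
  have hvb₁ : v ≠ b₁ := fun h => disjoint_left.1 hdisj (mem_insert_self v _) (by simp [h])
  have hax₁ : a ≠ x₁ := fun h =>
    disjoint_left.1 hdisj (mem_insert_of_mem (mem_insert_self a _)) (by simp [h])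
  have hc : ∀ {w p q}, p ≠ q → G.Adj w p → G.Adj w q → p ∈ D → q ∈ D →
      c ≤ deletionFactor G U D w := fun hpq hp hq hpD hqD =>
    c_le_deletionFactor hdeg hD (T := {_, _}) (by simp [insert_subset_iff, hp, hq, hpD, hqD])
      (card_pair hpq)
  have hnear : c ^ 4 ≤ ∏ w ∈ ({v, a, b, a₁} : Finset V), deletionFactor G U D w := by
    rw [prod_insert hvS, prod_insert haS, prod_pair hba₁, show c ^ 4 = c * (c * (c * c)) by ring]
    gcongr
    exacts [hc hab hva hvb haD hbD, hc hva₁ hva.symm haa₁ hvD ha₁D,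
      hc hvb₁ hvb.symm hbb₁ hvD hb₁D, hc hax₁ haa₁.symm ha₁x₁ haD hx₁D]
  -- `b₁ = x₁` is the 5-cycle, where `b₁` loses both of its neighbours
  have hfar : c ≤ ∏ w ∈ ({b₁, x₁} : Finset V), deletionFactor G U D w := by
    by_cases hbx : b₁ = x₁
    · subst hbx
      simpa using hc hba₁ hbb₁.symm ha₁x₁.symm hbD ha₁D
    · rw [prod_pair hbx]
      calc c ≤ c ^ 2 / √2 * (c ^ 2 / √2) := by
            rw [c_sq_div_sqrt_two_mul_self]
            nlinarith [two_le_c_cube, c_pos]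
        _ ≤ _ := by
          gcongr
          exacts [c_sq_div_sqrt_two_le_deletionFactor hdeg hD hbb₁.symm hbD,
            c_sq_div_sqrt_two_le_deletionFactor hdeg hD ha₁x₁.symm ha₁D]
  rw [prod_union hdisj, pow_succ]
  exact mul_le_mul hnear hfar c_pos.le (by positivity)

lemma misOn_sdiff_closedNbhd_le_of_path (hdeg : ∀ v, G.degree v ≤ 2) {U : Finset V}
    (ih : ∀ U' ⊂ U, WeightBound G U') (h2 : ∀ x ∈ U, degIn G U x = 2) {v a b a₁ : V}
    (hv : v ∈ U) (hN : G.neighborFinset v ∩ U = {a, b}) (hab : a ≠ b) (hab' : ¬ G.Adj a b)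
    (hNa : G.neighborFinset a ∩ U = {v, a₁}) (ha₁v : a₁ ≠ v) (hba₁ : ¬ G.Adj b a₁) {t : ℕ}
    (ht : TrianglePackingLE G (U \ closedNbhd G {b, a₁}) t) :
    (misOn G (U \ closedNbhd G {b, a₁}) : ℝ) ≤ (3 / c ^ 3) ^ t * weight G U / 5 := by
  have ha : G.Adj v a ∧ a ∈ U := by simpa using hN.ge (mem_insert_self a {b})
  have hb : G.Adj v b ∧ b ∈ U := by simpa using hN.ge (mem_insert_of_mem (mem_singleton_self b))
  have ha₁ : G.Adj a a₁ ∧ a₁ ∈ U := by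
    simpa using hNa.ge (mem_insert_of_mem (mem_singleton_self a₁))
  obtain ⟨b₁, hb₁v, hNb⟩ := exists_neighborFinset_inter_eq_pair (h2 b hb.2) hb.1.symm hv
  obtain ⟨x₁, hx₁a, hNa₁⟩ := exists_neighborFinset_inter_eq_pair (h2 a₁ ha₁.2) ha₁.1.symm ha.2
  have hb₁ : G.Adj b b₁ ∧ b₁ ∈ U := by
    simpa using hNb.ge (mem_insert_of_mem (mem_singleton_self b₁))
  have hx₁ : G.Adj a₁ x₁ ∧ x₁ ∈ U := by
    simpa using hNa₁.ge (mem_insert_of_mem (mem_singleton_self x₁))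
  have hx₁v : x₁ ≠ v := by
    rintro rfl
    have : a₁ ∈ G.neighborFinset x₁ ∩ U := by simp [hx₁.1.symm, ha₁.2]
    rw [hN, mem_insert, mem_singleton] at this
    rcases this with rfl | rfl
    exacts [G.loopless.irrefl _ ha₁.1, hab' ha₁.1]
  have hne : b₁ ≠ a ∧ a₁ ≠ b ∧ x₁ ≠ b ∧ b₁ ≠ a₁ := by
    refine ⟨?_, ?_, ?_, ?_⟩ <;> rintro rfl
    exacts [hab' hb₁.1.symm, hab' ha₁.1, hba₁ hx₁.1.symm, hba₁ hb₁.1]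
  have hS : {v, a, b, a₁} ∪ {b₁, x₁} ⊆ U ∩ closedNbhd G {b, a₁} := by
    simp [insert_subset_iff, hv, ha.2, hb.2, ha₁.2, hb₁.2, hx₁.2, hb.1.symm, ha₁.1.symm, hb₁.1,
      hx₁.1]
  refine c_pow_five ▸ misOn_sdiff_closedNbhd_le hdeg ih (p := b) (by simp) hb.2 ht hS
    (by positivity) (c_pow_five_le_prod_deletionFactor_of_path hdeg inter_subset_left ha.1 hb.1
      ha₁.1 hb₁.1 hx₁.1 hS (by simp [ha.1.ne, hb.1.ne, ha₁v.symm]) (by simp [hab, ha₁.1.ne])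
      hne.2.1.symm ?_)
  simp [hb₁v, hne.1, hb₁.1.ne.symm, hne.2.2.2, hx₁v, hx₁a, hne.2.2.1, hx₁.1.ne.symm]

lemma weightBound_of_cycle (hdeg : ∀ v, G.degree v ≤ 2) {U : Finset V}
    (ih : ∀ U' ⊂ U, WeightBound G U') (h2 : ∀ x ∈ U, degIn G U x = 2) {v a b : V}
    (hv : v ∈ U) (hN : G.neighborFinset v ∩ U = {a, b}) (hab : a ≠ b) (hab' : ¬ G.Adj a b) :
    WeightBound G U := by
  intro t ht
  have ha : G.Adj v a ∧ a ∈ U := by simpa using hN.ge (mem_insert_self a {b})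
  obtain ⟨a₁, ha₁v, hNa⟩ := exists_neighborFinset_inter_eq_pair (h2 a ha.2) ha.1.symm hv
  have hvbranch := misOn_sdiff_closedNbhd_le_of_pair hdeg ih hv hN hab (ht.mono sdiff_subset)
  have habranch := misOn_sdiff_closedNbhd_le_of_pair hdeg ih ha.2 hNa ha₁v.symm
    (ht.mono sdiff_subset)
  -- a maximal independent set avoiding `v` and `a` needs `b` and `a₁` to dominate them
  have hcover : ∀ s, IsMaxIndepIn G U s → {v} ⊆ s ∨ {a} ⊆ s ∨ {b, a₁} ⊆ s := fun s hs => by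
    have := hs.mem_or_mem_or_mem_of_eq_pair hv hN
    have := hs.mem_or_mem_or_mem_of_eq_pair ha.2 hNa
    simp only [singleton_subset_iff, insert_subset_iff]
    tauto
  have := weight_pos (G := G) U
  by_cases hba₁ : G.Adj b a₁
  · have hcover₂ := misOn_le_add_of_cover G U {v} {a} fun s hs =>
      (hcover s hs).imp_right fun h => h.resolve_right fun hsub =>
        hs.2.1 (hsub (mem_insert_self b {a₁})) (hsub (by simp)) hba₁
    have : 0 ≤ (3 / c ^ 3) ^ t * weight G U := by positivity
    calc (misOn G U : ℝ) ≤ _ := by exact_mod_cast hcover₂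
      _ ≤ _ := add_le_add hvbranch habranch
      _ ≤ _ := by linarith
  · have hpath := misOn_sdiff_closedNbhd_le_of_path hdeg ih h2 hv hN hab hab' hNa ha₁v hba₁
      (ht.mono sdiff_subset)
    calc (misOn G U : ℝ) ≤ _ := by exact_mod_cast misOn_le_add_add_of_cover G U _ _ _ hcover
      _ ≤ _ := add_le_add (add_le_add hvbranch habranch) hpath
      _ = _ := by ring

theorem weightBound (hdeg : ∀ v, G.degree v ≤ 2) (U : Finset V) : WeightBound G U := by
  induction U using Finset.strongInduction with
  | H U ih =>
  by_cases h0 : ∃ x ∈ U, degIn G U x = 0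
  · obtain ⟨x, hx, h0⟩ := h0
    exact weightBound_of_degIn_eq_zero hdeg ih hx h0
  by_cases h1 : ∃ x ∈ U, degIn G U x = 1
  · obtain ⟨x, hx, h1⟩ := h1
    obtain ⟨y, hy⟩ := card_eq_one.1 h1
    exact weightBound_of_degIn_eq_one hdeg ih hx hy
  push Not at h0 h1
  have h2 : ∀ x ∈ U, degIn G U x = 2 := fun x hx => by
    have := (degIn_le_degree (G := G) U x).trans (hdeg x)
    have := h0 x hx
    have := h1 x hx
    omega
  rcases U.eq_empty_or_nonempty with rfl | ⟨v, hv⟩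
  · intro t _
    simpa [misOn_empty, weight] using one_le_pow₀ one_le_three_div_c_cube
  obtain ⟨a, b, hab, hN⟩ := card_eq_two.1 (h2 v hv)
  by_cases hab' : G.Adj a b
  · exact weightBound_of_triangle hdeg ih hv hN hab'
  · exact weightBound_of_cycle hdeg ih h2 hv hN hab hab'

lemma weight_univ (hreg : ∀ v, G.degree v = 2) : weight G univ = c ^ Fintype.card V := by
  simp [weight, degIn, hreg, two_div_c_mul_r_sq]

end MisTwoRegular

theorem mis_two_regular_le (n t : ℕ) (G : SimpleGraph (Fin n)) [DecidableRel G.Adj]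
    (hreg : ∀ v, G.degree v = 2)
    (htri : ¬ ∃ f : Fin (t + 1) → Finset (Fin n),
      (∀ i, (f i).card = 3 ∧ ∀ a ∈ f i, ∀ b ∈ f i, a ≠ b → G.Adj a b) ∧
      (∀ i j, i ≠ j → Disjoint (f i) (f j))) :
    (mis G : ℝ) ≤ 3 ^ t * (5 : ℝ) ^ (((n : ℝ) - 3 * t) / 5) := by
  have hbound := MisTwoRegular.weightBound (fun v => (hreg v).le) univ t
    (MisTwoRegular.trianglePackingLE_univ htri)
  rw [← MisTwoRegular.mis_eq_misOn_univ, MisTwoRegular.weight_univ hreg, Fintype.card_fin]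
    at hbound
  exact hbound.trans_eq (MisTwoRegular.three_div_c_cube_pow_mul_c_pow t n)
end
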